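/- arXiv:0905.1673 — 7 statements merged into one kernel-verified Lean document; each statement's English description precedes it below -/
import Mathlib

section
/- Upper game-theoretic probability is countably subadditive: for any sequence E₁, E₂, … of subsets of Π, UpProb(⋃ᵢ Eᵢ) ≤ Σᵢ UpProb(Eᵢ). In particular, if UpProb(Eᵢ) = 0 for all i, then UpProb(⋃ᵢ Eᵢ) = 0. -/
open Filter Topology MeasureTheory
open scoped ENNReal NNReal unitInterval

noncomputable section

/-- Finite prequential sequences: finite sequences of pairs (p, y) with p ∈ [0,1], y ∈ {0,1}. -/
abbrev PreqFin := List (unitInterval × Bool)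

/-- The prequential space Π = ([0,1] × {0,1})^∞. -/
abbrev PreqInf := ℕ → unitInterval × Bool

/-- The length-n prefix π^n of π ∈ Π. -/
def prefixn (π : PreqInf) (n : ℕ) : PreqFin := List.ofFn fun i : Fin n => π i

/-- A non-negative farthingale (values in [0,∞], with the convention 0·∞ = 0):
V(x) = (1-p)·V(x,p,0) + p·V(x,p,1). -/
def IsFarthingale (V : PreqFin → ℝ≥0∞) : Prop :=
  ∀ (x : PreqFin) (p : unitInterval),
    V x = ENNReal.ofReal (1 - (p : ℝ)) * V (x ++ [(p, false)])
        + ENNReal.ofReal (p : ℝ) * V (x ++ [(p, true)])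

/-- Upper game-theoretic probability of a prequential event E ⊆ Π. -/
def UpProb (E : Set PreqInf) : ℝ≥0∞ :=
  sInf {a | ∃ V : PreqFin → ℝ≥0∞, IsFarthingale V ∧ V [] = a ∧
    ∀ π ∈ E, 1 ≤ Filter.limsup (fun n => V (prefixn π n)) Filter.atTop}

def Covers (V : PreqFin → ℝ≥0∞) (E : Set PreqInf) : Prop :=
  ∀ π ∈ E, 1 ≤ limsup (fun n => V (prefixn π n)) atTop

theorem IsFarthingale.tsum {ι : Type*} {V : ι → PreqFin → ℝ≥0∞}
    (hV : ∀ i, IsFarthingale (V i)) : IsFarthingale fun x => ∑' i, V i x := by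
  intro x p
  calc ∑' i, V i x
      = ∑' i, (ENNReal.ofReal (1 - (p : ℝ)) * V i (x ++ [(p, false)])
          + ENNReal.ofReal (p : ℝ) * V i (x ++ [(p, true)])) := tsum_congr fun i => hV i x p
    _ = ENNReal.ofReal (1 - (p : ℝ)) * ∑' i, V i (x ++ [(p, false)])
          + ENNReal.ofReal (p : ℝ) * ∑' i, V i (x ++ [(p, true)]) := by
      rw [ENNReal.tsum_add, ENNReal.tsum_mul_left, ENNReal.tsum_mul_left]

theorem Covers.tsum_iUnion {ι : Type*} {V : ι → PreqFin → ℝ≥0∞} {E : ι → Set PreqInf}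
    (hV : ∀ i, Covers (V i) (E i)) : Covers (fun x => ∑' i, V i x) (⋃ i, E i) := by
  intro π hπ
  obtain ⟨j, hj⟩ := Set.mem_iUnion.mp hπ
  exact (hV j π hj).trans <| limsup_le_limsup <| .of_forall fun n => ENNReal.le_tsum j

theorem upProb_le_of_covers {V : PreqFin → ℝ≥0∞} {E : Set PreqInf}
    (hV : IsFarthingale V) (hcov : Covers V E) : UpProb E ≤ V [] :=
  sInf_le ⟨V, hV, rfl, hcov⟩

theorem exists_covers_lt_of_upProb_lt {E : Set PreqInf} {b : ℝ≥0∞} (hb : UpProb E < b) :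
    ∃ V, IsFarthingale V ∧ Covers V E ∧ V [] < b := by
  obtain ⟨_, ⟨V, hV, rfl, hcov⟩, hlt⟩ := sInf_lt_iff.mp hb
  exact ⟨V, hV, hcov, hlt⟩

theorem upProb_iUnion_le_tsum (E : ℕ → Set PreqInf) :
    UpProb (⋃ i, E i) ≤ ∑' i, UpProb (E i) := by
  by_cases htop : ∑' i, UpProb (E i) = ∞
  · exact htop ▸ le_top
  refine ENNReal.le_of_forall_pos_le_add fun ε hε _ => ?_
  obtain ⟨δ, hδpos, hδsum⟩ := ENNReal.exists_pos_sum_of_countable' (ε := ε) (by exact_mod_cast hε.ne') ℕ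
  have hlt : ∀ i, UpProb (E i) < UpProb (E i) + δ i := fun i =>
    ENNReal.lt_add_right (ne_top_of_le_ne_top htop (ENNReal.le_tsum i)) (hδpos i).ne'
  choose V hV hcov hVlt using fun i => exists_covers_lt_of_upProb_lt (hlt i)
  calc UpProb (⋃ i, E i)
      ≤ ∑' i, V i [] := upProb_le_of_covers (IsFarthingale.tsum hV) (Covers.tsum_iUnion hcov)
    _ ≤ ∑' i, (UpProb (E i) + δ i) := ENNReal.tsum_le_tsum fun i => (hVlt i).le
    _ = ∑' i, UpProb (E i) + ∑' i, δ i := ENNReal.tsum_add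
    _ ≤ ∑' i, UpProb (E i) + ε := by gcongr

/-- Countable subadditivity of upper game-theoretic probability; in particular, a countable
union of events of upper probability zero has upper probability zero. -/
theorem upProb_countably_subadditive (E : ℕ → Set PreqInf) :
    UpProb (⋃ i, E i) ≤ ∑' i, UpProb (E i) ∧
      ((∀ i, UpProb (E i) = 0) → UpProb (⋃ i, E i) = 0) := by
  refine ⟨upProb_iUnion_le_tsum E, fun h => ?_⟩
  simpa [h] using upProb_iUnion_le_tsum E
end
end

section
/- For any subset E of the prequential space Π, the value of UpProb(E) is unchanged if in its definition the condition limsup_n V(π^n) ≥ 1 is replaced by sup_n V(π^n) ≥ 1. -/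
/-! Requiring `limsup ≥ 1` is more demanding than `sup ≥ 1`, so `UpProbSup ≤ UpProb`. Conversely,
given a farthingale `V` with `sup_n V(πⁿ) ≥ 1` on `E` and a level `c < 1`, stop `V` at the first
prefix where it reaches `c`. The stopped process is again a farthingale with the same initial
value, and along every `π ∈ E` it is eventually `≥ c`; so `c⁻¹` times it witnesses
`UpProb E ≤ c⁻¹ * V []`, and `c → 1` finishes. -/

open Filter Topology MeasureTheory
open scoped ENNReal NNReal unitInterval

noncomputable section

/-- The variant of upper game-theoretic probability where `limsup` is replaced by `sup`. -/
def UpProbSup (E : Set PreqInf) : ℝ≥0∞ :=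
  sInf {a | ∃ V : PreqFin → ℝ≥0∞, IsFarthingale V ∧ V [] = a ∧
    ∀ π ∈ E, 1 ≤ ⨆ n, V (prefixn π n)}

lemma prefixn_prefix (π : PreqInf) {n m : ℕ} (h : n ≤ m) : prefixn π n <+: prefixn π m := by
  obtain ⟨k, rfl⟩ := Nat.exists_eq_add_of_le h
  exact ⟨List.ofFn fun i : Fin k => π (n + i), by simp [prefixn, List.ofFn_add]⟩

lemma unitInterval.ofReal_one_sub_add_ofReal (p : I) :
    ENNReal.ofReal (1 - p) + ENNReal.ofReal p = 1 := by
  rw [← ENNReal.ofReal_add (unitInterval.one_minus_nonneg p) p.2.1, sub_add_cancel,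
    ENNReal.ofReal_one]

lemma IsFarthingale.const_mul {V : PreqFin → ℝ≥0∞} (hV : IsFarthingale V) (a : ℝ≥0∞) :
    IsFarthingale fun x => a * V x := by
  intro x p
  dsimp only
  rw [hV x p]
  ring

def stopAtLevel (V : PreqFin → ℝ≥0∞) (c : ℝ≥0∞) (x : PreqFin) : ℝ≥0∞ :=
  V ((x.inits.find? fun y => c ≤ V y).getD x)

section stopAtLevel

variable {V : PreqFin → ℝ≥0∞} {c : ℝ≥0∞} {x : PreqFin}

lemma stopAtLevel_nil : stopAtLevel V c [] = V [] := by
  by_cases h : c ≤ V [] <;> simp [stopAtLevel, h]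

lemma stopAtLevel_of_find?_eq_none (h : (x.inits.find? fun y => c ≤ V y) = none) :
    stopAtLevel V c x = V x := by
  simp [stopAtLevel, h]

lemma stopAtLevel_append_of_isSome (h : (x.inits.find? fun y => c ≤ V y).isSome)
    (t : PreqFin) : stopAtLevel V c (x ++ t) = stopAtLevel V c x := by
  obtain ⟨z, hz⟩ := Option.isSome_iff_exists.1 h
  simp [stopAtLevel, List.inits_append, List.find?_append, hz]

lemma stopAtLevel_append_singleton_of_find?_eq_none
    (h : (x.inits.find? fun y => c ≤ V y) = none) (a : unitInterval × Bool) :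
    stopAtLevel V c (x ++ [a]) = V (x ++ [a]) := by
  by_cases ha : c ≤ V (x ++ [a]) <;>
    simp [stopAtLevel, List.inits_append, List.find?_append, h, ha]

lemma le_stopAtLevel_of_prefix {y : PreqFin} (hx : c ≤ V x) (hxy : x <+: y) :
    c ≤ stopAtLevel V c y := by
  obtain ⟨t, rfl⟩ := hxy
  have hsome : (x.inits.find? fun y => c ≤ V y).isSome :=
    List.find?_isSome.2 ⟨x, (List.mem_inits _ _).2 (List.prefix_refl x), by simpa using hx⟩
  obtain ⟨z, hz⟩ := Option.isSome_iff_exists.1 hsome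
  rw [stopAtLevel_append_of_isSome hsome, stopAtLevel, hz]
  simpa using List.find?_some hz

lemma isFarthingale_stopAtLevel (hV : IsFarthingale V) (c : ℝ≥0∞) :
    IsFarthingale (stopAtLevel V c) := by
  intro x p
  cases h : x.inits.find? fun y => c ≤ V y with
  | none =>
    rw [stopAtLevel_of_find?_eq_none h, stopAtLevel_append_singleton_of_find?_eq_none h,
      stopAtLevel_append_singleton_of_find?_eq_none h]
    exact hV x p
  | some z =>
    have hsome : (x.inits.find? fun y => c ≤ V y).isSome := by simp [h]
    rw [stopAtLevel_append_of_isSome hsome, stopAtLevel_append_of_isSome hsome, ← add_mul,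
      unitInterval.ofReal_one_sub_add_ofReal, one_mul]

end stopAtLevel

theorem upProb_le_of_one_le_iSup {E : Set PreqInf} {V : PreqFin → ℝ≥0∞} (hV : IsFarthingale V)
    (hE : ∀ π ∈ E, 1 ≤ ⨆ n, V (prefixn π n)) : UpProb E ≤ V [] := by
  refine ENNReal.le_of_forall_lt_one_mul_le fun c hc => ?_
  rcases eq_or_ne c 0 with rfl | hc0
  · simp
  have hc_top : c ≠ ∞ := hc.ne_top
  rw [ENNReal.mul_le_iff_le_inv hc0 hc_top]
  refine sInf_le ⟨fun x => c⁻¹ * stopAtLevel V c x, (isFarthingale_stopAtLevel hV c).const_mul _,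
    congrArg (c⁻¹ * ·) stopAtLevel_nil, fun π hπ => ?_⟩
  obtain ⟨n, hn⟩ := lt_iSup_iff.1 (hc.trans_le (hE π hπ))
  refine le_limsup_of_frequently_le (Eventually.frequently ?_)
  filter_upwards [eventually_ge_atTop n] with m hm
  calc 1 = c⁻¹ * c := (ENNReal.inv_mul_cancel hc0 hc_top).symm
    _ ≤ c⁻¹ * stopAtLevel V c (prefixn π m) := by
      gcongr
      exact le_stopAtLevel_of_prefix hn.le (prefixn_prefix π hm)

/-- Replacing `limsup_n V(π^n) ≥ 1` by `sup_n V(π^n) ≥ 1` in the definition of upper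
game-theoretic probability does not change its value. -/
theorem upProbSup_eq_upProb (E : Set PreqInf) : UpProbSup E = UpProb E := by
  refine le_antisymm (sInf_le_sInf ?_) (le_sInf ?_)
  · rintro a ⟨V, hV, rfl, hE⟩
    exact ⟨V, hV, rfl, fun π hπ => (hE π hπ).trans limsup_le_iSup⟩
  · rintro a ⟨V, hV, rfl, hE⟩
    exact upProb_le_of_one_le_iSup hV hE
end
end

section
/- Upper measure-theoretic probability never exceeds upper game-theoretic probability: for every subset E of the prequential space Π, UpProb(E) ≥ sup_φ Prob_φ*({ω ∈ Ω : ω^φ ∈ E}), where the supremum is over all forecasting systems φ and Prob_φ* denotes outer measure. -/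
open Filter Topology MeasureTheory
open scoped ENNReal NNReal unitInterval

noncomputable section

/-- Ω = {0,1}^∞. -/
abbrev BinSeq := ℕ → Bool

/-- The length-n prefix ω^n of ω ∈ Ω. -/
def bprefix (ω : BinSeq) (n : ℕ) : List Bool := List.ofFn fun i : Fin n => ω i

/-- Γ(x): the set of infinite extensions of the finite binary sequence x. -/
def cyl (x : List Bool) : Set BinSeq := {ω | bprefix ω x.length = x}

/-- A forecasting system is a function φ : Ω◇ → [0,1]. -/
abbrev ForecastingSystem := List Bool → unitInterval

/-- μ is the probability measure Prob_φ induced by the forecasting system φ: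
Prob_φ(Γ(x1)) = φ(x)·Prob_φ(Γ(x)). -/
def IsForecastMeasure (φ : ForecastingSystem) (μ : Measure BinSeq) : Prop :=
  IsProbabilityMeasure μ ∧
    ∀ x : List Bool, μ (cyl (x ++ [true])) = ENNReal.ofReal (φ x : ℝ) * μ (cyl x)

/-- ω^φ ∈ Π: the interleaving of the forecasts produced by φ with the outcomes of ω. -/
def seqPhi (φ : ForecastingSystem) (ω : BinSeq) : PreqInf :=
  fun n => (φ (bprefix ω n), ω n)

/-- Upper measure-theoretic probability of a prequential event E ⊆ Π
(the measure, coerced to an outer measure, is applied to the possibly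
non-measurable set {ω : ω^φ ∈ E}). -/
def UpProbMeas (E : Set PreqInf) : ℝ≥0∞ :=
  ⨆ (φ : ForecastingSystem) (μ : Measure BinSeq) (_ : IsForecastMeasure φ μ),
    μ {ω | seqPhi φ ω ∈ E}

-- AUX

lemma bprefix_succ (ω : BinSeq) (n : ℕ) : bprefix ω (n+1) = bprefix ω n ++ [ω n] := by
  simp only [bprefix, List.ofFn_succ', List.concat_eq_append, Fin.coe_castSucc, Fin.val_last]

lemma bprefix_length (ω : BinSeq) (n : ℕ) : (bprefix ω n).length = n := by
  simp [bprefix]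

lemma prefixn_succ (π : PreqInf) (n : ℕ) : prefixn π (n+1) = prefixn π n ++ [π n] := by
  simp only [prefixn, List.ofFn_succ', List.concat_eq_append, Fin.coe_castSucc, Fin.val_last]

def preqOf (φ : ForecastingSystem) (x : List Bool) : PreqFin :=
  List.ofFn fun i : Fin x.length => (φ (x.take i), x.get i)

lemma preqOf_nil (φ : ForecastingSystem) : preqOf φ [] = [] := by
  simp [preqOf]

lemma preqOf_concat (φ : ForecastingSystem) (x : List Bool) (b : Bool) :
    preqOf φ (x ++ [b]) = preqOf φ x ++ [(φ x, b)] := by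
  apply List.ext_getElem
  · simp [preqOf]
  · intro i h1 h2
    simp only [preqOf, List.getElem_ofFn]
    rcases lt_or_ge i x.length with hi | hi
    · rw [List.getElem_append_left (by simpa [preqOf] using hi)]
      simp only [preqOf, List.getElem_ofFn]
      congr 1
      · congr 1
        exact List.take_append_of_le_length (le_of_lt hi)
      · exact List.getElem_append_left hi
    · have hix : i = x.length := by
        simp only [preqOf, List.length_append, List.length_ofFn, List.length_singleton] at h2
        omega
      subst hix
      rw [List.getElem_append_right (by simp [preqOf])]
      simp only [preqOf, List.length_ofFn, Nat.sub_self, List.getElem_singleton]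
      rw [List.take_left]
      congr 1
      show (x ++ [b])[x.length] = b
      rw [List.getElem_append_right (le_refl _)]
      simp

lemma preqOf_bprefix (φ : ForecastingSystem) (ω : BinSeq) (n : ℕ) :
    preqOf φ (bprefix ω n) = prefixn (seqPhi φ ω) n := by
  induction n with
  | zero => simp [bprefix, prefixn, preqOf]
  | succ n ih =>
    rw [bprefix_succ, prefixn_succ, ← ih]
    have := preqOf_concat φ (bprefix ω n) (ω n)
    rw [this]
    rfl

lemma mem_cyl_iff (ω : BinSeq) (x : List Bool) : ω ∈ cyl x ↔ bprefix ω x.length = x := Iff.rfl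

lemma mem_cyl_append (ω : BinSeq) (x : List Bool) (b : Bool) :
    ω ∈ cyl (x ++ [b]) ↔ ω ∈ cyl x ∧ ω x.length = b := by
  rw [mem_cyl_iff, mem_cyl_iff]
  have hl : (x ++ [b]).length = x.length + 1 := by simp
  rw [hl, bprefix_succ]
  constructor
  · intro h
    have := List.append_inj h (by simp [bprefix_length])
    exact ⟨this.1, by simpa using this.2⟩
  · rintro ⟨h1, h2⟩
    rw [h1, h2]

lemma cyl_nil : cyl ([] : List Bool) = Set.univ := by
  ext ω; simp [cyl, bprefix]

lemma measurable_cyl (x : List Bool) : MeasurableSet (cyl x) := by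
  have : cyl x = ⋂ i : Fin x.length, {ω : BinSeq | ω i = x.get i} := by
    ext ω
    simp only [Set.mem_iInter, Set.mem_setOf_eq, mem_cyl_iff]
    constructor
    · intro h i
      have hlt : (i : ℕ) < (bprefix ω x.length).length := by
        simpa [bprefix_length] using i.isLt
      have := List.getElem_of_eq h hlt
      simpa [bprefix, List.get_eq_getElem] using this
    · intro h
      apply List.ext_getElem (by simp [bprefix_length])
      intro i hi1 hi2
      simp only [bprefix, List.getElem_ofFn]
      exact h ⟨i, hi2⟩
  rw [this]
  refine MeasurableSet.iInter fun i => ?_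
  show MeasurableSet ((fun f : BinSeq => f (i : ℕ)) ⁻¹' {x.get i})
  exact (measurable_pi_apply (i : ℕ)) (measurableSet_singleton (x.get i))

lemma cyl_split (x : List Bool) : cyl x = cyl (x ++ [false]) ∪ cyl (x ++ [true]) := by
  ext ω
  simp only [Set.mem_union, mem_cyl_append]
  cases hb : ω x.length <;> simp [hb]

lemma cyl_disj (x : List Bool) : Disjoint (cyl (x ++ [false])) (cyl (x ++ [true])) := by
  rw [Set.disjoint_left]
  intro ω h0 h1
  rw [mem_cyl_append] at h0 h1
  rw [h0.2] at h1
  exact absurd h1.2 (by simp)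

lemma measure_cyl_false {φ : ForecastingSystem} {μ : Measure BinSeq}
    (hμ : IsForecastMeasure φ μ) (x : List Bool) :
    μ (cyl (x ++ [false])) = ENNReal.ofReal (1 - (φ x : ℝ)) * μ (cyl x) := by
  haveI : IsProbabilityMeasure μ := hμ.1
  have hsplit : μ (cyl x) = μ (cyl (x ++ [false])) + μ (cyl (x ++ [true])) := by
    rw [cyl_split x]
    exact measure_union (cyl_disj x) (measurable_cyl _)
  have htrue := hμ.2 x
  have hfin : ENNReal.ofReal (φ x : ℝ) * μ (cyl x) ≠ ∞ :=
    ENNReal.mul_ne_top ENNReal.ofReal_ne_top (measure_ne_top μ _)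
  have h0 : μ (cyl (x ++ [false])) = μ (cyl x) - ENNReal.ofReal (φ x : ℝ) * μ (cyl x) := by
    rw [htrue] at hsplit
    exact ENNReal.eq_sub_of_add_eq hfin hsplit.symm
  rw [h0, ENNReal.ofReal_sub _ (φ x).2.1, ENNReal.ofReal_one,
    ENNReal.sub_mul (fun _ _ => measure_ne_top μ _), one_mul]

lemma f_add {φ : ForecastingSystem} {μ : Measure BinSeq} {V : PreqFin → ℝ≥0∞}
    (hμ : IsForecastMeasure φ μ) (hV : IsFarthingale V) (x : List Bool) :
    V (preqOf φ (x ++ [false])) * μ (cyl (x ++ [false]))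
      + V (preqOf φ (x ++ [true])) * μ (cyl (x ++ [true]))
      = V (preqOf φ x) * μ (cyl x) := by
  rw [measure_cyl_false hμ, hμ.2 x, preqOf_concat, preqOf_concat,
    hV (preqOf φ x) (φ x)]
  ring

lemma key {φ : ForecastingSystem} {μ : Measure BinSeq} {V : PreqFin → ℝ≥0∞}
    (hμ : IsForecastMeasure φ μ) (hV : IsFarthingale V) (lam : ℝ≥0∞) :
    ∀ (n : ℕ) (x : List Bool),
      lam * μ (cyl x ∩ {ω | ∃ k ≤ n, lam ≤ V (preqOf φ (bprefix ω (x.length + k)))})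
        ≤ V (preqOf φ x) * μ (cyl x) := by
  intro n
  induction n with
  | zero =>
    intro x
    by_cases hlam : lam ≤ V (preqOf φ x)
    · calc lam * μ (cyl x ∩ _) ≤ lam * μ (cyl x) :=
            mul_le_mul_right (measure_mono Set.inter_subset_left) _
        _ ≤ V (preqOf φ x) * μ (cyl x) := mul_le_mul_left hlam _
    · have : cyl x ∩ {ω | ∃ k ≤ 0, lam ≤ V (preqOf φ (bprefix ω (x.length + k)))} = ∅ := by
        ext ω
        simp only [Set.mem_inter_iff, Set.mem_setOf_eq, Set.mem_empty_iff_false, iff_false,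
          not_and]
        rintro hc ⟨k, hk, hle⟩
        interval_cases k
        rw [Nat.add_zero] at hle
        rw [mem_cyl_iff] at hc
        rw [hc] at hle
        exact hlam hle
      rw [this]
      simp
  | succ n ih =>
    intro x
    by_cases hlam : lam ≤ V (preqOf φ x)
    · calc lam * μ (cyl x ∩ _) ≤ lam * μ (cyl x) :=
            mul_le_mul_right (measure_mono Set.inter_subset_left) _
        _ ≤ V (preqOf φ x) * μ (cyl x) := mul_le_mul_left hlam _
    · set A : Bool → Set BinSeq := fun b =>
        cyl (x ++ [b]) ∩
          {ω | ∃ k ≤ n, lam ≤ V (preqOf φ (bprefix ω ((x ++ [b]).length + k)))} with hA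
      have hsub : cyl x ∩ {ω | ∃ k ≤ n + 1,
          lam ≤ V (preqOf φ (bprefix ω (x.length + k)))} ⊆ A false ∪ A true := by
        rintro ω ⟨hc, k, hk, hle⟩
        rcases Nat.eq_zero_or_pos k with hk0 | hkpos
        · exfalso
          subst hk0
          rw [Nat.add_zero, (mem_cyl_iff ω x).mp hc] at hle
          exact hlam hle
        · obtain ⟨k', rfl⟩ := Nat.exists_eq_succ_of_ne_zero (Nat.pos_iff_ne_zero.mp hkpos)
          have hmem : ω ∈ cyl (x ++ [ω x.length]) := by
            rw [mem_cyl_append]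
            exact ⟨hc, rfl⟩
          have hk' : ∃ j ≤ n, lam ≤ V (preqOf φ (bprefix ω ((x ++ [ω x.length]).length + j))) := by
            refine ⟨k', by omega, ?_⟩
            have : (x ++ [ω x.length]).length + k' = x.length + (k' + 1) := by
              simp; omega
            rw [this]
            exact hle
          cases hb : ω x.length
          · left; rw [hA]; rw [hb] at hmem hk'; exact ⟨hmem, hk'⟩
          · right; rw [hA]; rw [hb] at hmem hk'; exact ⟨hmem, hk'⟩
      calc lam * μ (cyl x ∩ _) ≤ lam * (μ (A false) + μ (A true)) :=
            mul_le_mul_right ((measure_mono hsub).trans (measure_union_le _ _)) _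
        _ = lam * μ (A false) + lam * μ (A true) := mul_add _ _ _
        _ ≤ V (preqOf φ (x ++ [false])) * μ (cyl (x ++ [false]))
            + V (preqOf φ (x ++ [true])) * μ (cyl (x ++ [true])) :=
            add_le_add (ih (x ++ [false])) (ih (x ++ [true]))
        _ = V (preqOf φ x) * μ (cyl x) := f_add hμ hV x

/-- Upper measure-theoretic probability never exceeds upper game-theoretic probability. -/
theorem upProbMeas_le_upProb (E : Set PreqInf) : UpProbMeas E ≤ UpProb E := by
  refine iSup_le fun φ => iSup_le fun μ => iSup_le fun hμ => le_sInf fun a ha => ?_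
  obtain ⟨V, hV, hVa, hlim⟩ := ha
  haveI : IsProbabilityMeasure μ := hμ.1
  refine ENNReal.le_of_forall_lt_one_mul_le fun lam hlam => ?_
  set H : ℕ → Set BinSeq := fun n => {ω | ∃ k ≤ n, lam ≤ V (preqOf φ (bprefix ω k))} with hH
  have hkey : ∀ n, lam * μ (H n) ≤ a := by
    intro n
    have h := key hμ hV lam n []
    simpa [cyl_nil, preqOf_nil, hVa] using h
  have hdir : Directed (· ⊆ ·) H := by
    refine directed_of_isDirected_le fun m n hmn => ?_
    rintro ω ⟨k, hk, hle⟩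
    exact ⟨k, hk.trans hmn, hle⟩
  have hsub : {ω | seqPhi φ ω ∈ E} ⊆ ⋃ n, H n := by
    intro ω hω
    have h1 := hlim _ hω
    by_contra hc
    simp only [Set.mem_iUnion, hH, Set.mem_setOf_eq, not_exists] at hc
    have hall : ∀ k, ¬ lam ≤ V (preqOf φ (bprefix ω k)) := fun k h => hc k k ⟨le_rfl, h⟩
    have hle : Filter.limsup (fun n => V (prefixn (seqPhi φ ω) n)) Filter.atTop ≤ lam := by
      refine Filter.limsup_le_of_le (by isBoundedDefault) ?_
      filter_upwards with n
      rw [← preqOf_bprefix]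
      exact le_of_not_ge (hall n)
    exact absurd (h1.trans hle) (not_le.mpr hlam)
  calc lam * μ {ω | seqPhi φ ω ∈ E} ≤ lam * μ (⋃ n, H n) :=
        mul_le_mul_right (measure_mono hsub) _
    _ = lam * ⨆ n, μ (H n) := by rw [hdir.measure_iUnion]
    _ = ⨆ n, lam * μ (H n) := ENNReal.mul_iSup _ _
    _ ≤ a := iSup_le hkey
end
end

section
/- For any prequential event E ⊆ Π, the function x ↦ UpProb(E | x) on Π◇ is a superfarthingale: for every x ∈ Π◇ and p ∈ [0,1], UpProb(E | x) ≥ (1-p)·UpProb(E | x,p,0) + p·UpProb(E | x,p,1). -/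
open Filter Topology MeasureTheory
open scoped ENNReal NNReal unitInterval

noncomputable section

/-- Γ(x): the set of infinite extensions in Π of the finite prequential sequence x. -/
def exts (x : PreqFin) : Set PreqInf := {π | prefixn π x.length = x}

/-- Conditional upper game-theoretic probability UpProb(E | x). -/
def UpProbCond (E : Set PreqInf) (x : PreqFin) : ℝ≥0∞ :=
  sInf {a | ∃ V : PreqFin → ℝ≥0∞, IsFarthingale V ∧ V x = a ∧
    ∀ π ∈ E ∩ exts x, 1 ≤ Filter.limsup (fun n => V (prefixn π n)) Filter.atTop}

/-- For any prequential event E, the function x ↦ UpProb(E | x) is a superfarthingale. -/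
theorem upProbCond_superfarthingale (E : Set PreqInf) (x : PreqFin) (p : unitInterval) :
    ENNReal.ofReal (1 - (p : ℝ)) * UpProbCond E (x ++ [(p, false)])
      + ENNReal.ofReal (p : ℝ) * UpProbCond E (x ++ [(p, true)]) ≤ UpProbCond E x := by
  have hsub : ∀ c : unitInterval × Bool, exts (x ++ [c]) ⊆ exts x := by
    intro c π h
    simp only [exts, Set.mem_setOf_eq, prefixn, List.length_append, List.length_singleton] at h ⊢
    rw [List.ofFn_succ'] at h
    have h2 : (List.ofFn fun i : Fin x.length => π i.castSucc) = x ∧ ([π x.length] : PreqFin) = [c] := by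
      apply List.append_inj _ (by simp)
      simpa [List.concat_eq_append] using h
    simpa using h2.1
  refine le_sInf ?_
  rintro a ⟨V, hF, hVx, hE⟩
  have key : ∀ c : unitInterval × Bool, UpProbCond E (x ++ [c]) ≤ V (x ++ [c]) := by
    intro c
    exact sInf_le ⟨V, hF, rfl, fun π hπ => hE π ⟨hπ.1, hsub c hπ.2⟩⟩
  calc ENNReal.ofReal (1 - (p : ℝ)) * UpProbCond E (x ++ [(p, false)])
      + ENNReal.ofReal (p : ℝ) * UpProbCond E (x ++ [(p, true)])
      ≤ ENNReal.ofReal (1 - (p : ℝ)) * V (x ++ [(p, false)])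
      + ENNReal.ofReal (p : ℝ) * V (x ++ [(p, true)]) := by
        gcongr <;> exact key _
    _ = V x := (hF x p).symm
    _ = a := hVx
end
end

section
/- Upper game-theoretic probability is continuous from above on compact sets: if K₁ ⊇ K₂ ⊇ ⋯ is a decreasing sequence of compact subsets of Π, then UpProb(⋂ᵢ Kᵢ) = lim_{i→∞} UpProb(Kᵢ). -/
/-!
Monotonicity gives one inequality. For the other, fix a farthingale `V` that succeeds on
`⋂ i, K i`, and `t < UpProb (K m)` for all `m`. Backward induction (a superfarthingale, repaired
into a farthingale) bounds `UpProb (K m)` by the supremum, over forecasting systems `φ`, of the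
`φ`-probability that the first `m` rounds form a prefix of a sequence in `K m`; so for every `m`
some `φ` gives this event probability `≥ t`. These probabilities are upper semicontinuous in `φ`
(the prefix sets are compact) and decrease in `m`, so by compactness one `φ` works for all `m`.
Under `φ`, Ville's inequality gives probability `≤ V [] / c` to `V` ever exceeding `c < 1`. On the
other hand, for some `m` almost every `φ`-play reaching `K m` has already seen `V` exceed `c`:
otherwise König's lemma yields a sequence in every (closed) `K i`, along which `V` stays `≤ c`.
Hence `c * t ≤ V []`.
-/

open Filter Topology MeasureTheory
open scoped ENNReal NNReal unitInterval

noncomputable section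

namespace Prequential

def bernExp (p : unitInterval) (f : Bool → ℝ≥0∞) : ℝ≥0∞ :=
  ENNReal.ofReal (1 - p) * f false + ENNReal.ofReal p * f true

lemma bernExp_const (p : unitInterval) (a : ℝ≥0∞) : bernExp p (fun _ => a) = a := by
  rw [bernExp, ← add_mul, ← ENNReal.ofReal_add (by linarith [p.2.2]) p.2.1]
  norm_num

lemma bernExp_mono (p : unitInterval) {f g : Bool → ℝ≥0∞} (h : ∀ y, f y ≤ g y) :
    bernExp p f ≤ bernExp p g := by
  unfold bernExp; gcongr <;> apply h

lemma bernExp_add (p : unitInterval) (f g : Bool → ℝ≥0∞) :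
    bernExp p (fun y => f y + g y) = bernExp p f + bernExp p g := by
  unfold bernExp; ring

lemma mul_bernExp (a : ℝ≥0∞) (p : unitInterval) (f : Bool → ℝ≥0∞) :
    a * bernExp p f = bernExp p fun y => a * f y := by
  unfold bernExp; ring

lemma bernExp_le_of_le {p : unitInterval} {f : Bool → ℝ≥0∞} {a : ℝ≥0∞} (h : ∀ y, f y ≤ a) :
    bernExp p f ≤ a :=
  (bernExp_mono p h).trans_eq (bernExp_const p a)

lemma exists_ne_zero_of_bernExp_ne_zero {p : unitInterval} {f : Bool → ℝ≥0∞}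
    (h : bernExp p f ≠ 0) : ∃ y, f y ≠ 0 := by
  by_contra! hf
  simp [bernExp, hf] at h

lemma bernExp_of_eq_zero {p : unitInterval} (hp : (p : ℝ) = 0) (f : Bool → ℝ≥0∞) :
    bernExp p f = f false := by
  simp [bernExp, hp]

def IsSuperfarthingale (S : PreqFin → ℝ≥0∞) : Prop :=
  ∀ x p, (bernExp p fun y => S (x ++ [(p, y)])) ≤ S x

/-- Children values under forecast `p` given the value `v ≥ S x` at `x`: the surplus
`v - bernExp p S` goes to the outcome `true`, except when `p = 0`, where `false` must carry `v`. -/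
def repairStep (S : PreqFin → ℝ≥0∞) (x : PreqFin) (p : unitInterval) (v : ℝ≥0∞) :
    Bool → ℝ≥0∞
  | true => S (x ++ [(p, true)]) + (v - bernExp p fun y => S (x ++ [(p, y)])) / ENNReal.ofReal p
  | false => if (p : ℝ) = 0 then v else S (x ++ [(p, false)])

def repair (S : PreqFin → ℝ≥0∞) (x : PreqFin) : ℝ≥0∞ :=
  x.reverseRecOn (S []) fun x e v => repairStep S x e.1 v e.2

lemma repair_nil (S : PreqFin → ℝ≥0∞) : repair S [] = S [] := by
  simp only [repair, List.reverseRecOn_nil]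

lemma repair_append_singleton (S : PreqFin → ℝ≥0∞) (x : PreqFin) (p : unitInterval) (y : Bool) :
    repair S (x ++ [(p, y)]) = repairStep S x p (repair S x) y := by
  simp only [repair, List.reverseRecOn_concat]

lemma le_repairStep {S : PreqFin → ℝ≥0∞} (hS : IsSuperfarthingale S) {x : PreqFin}
    {p : unitInterval} {v : ℝ≥0∞} (hv : S x ≤ v) (y : Bool) :
    S (x ++ [(p, y)]) ≤ repairStep S x p v y := by
  cases y with
  | true => exact le_self_add
  | false =>
    by_cases hp : (p : ℝ) = 0
    · have h := hS x p
      rw [bernExp_of_eq_zero hp] at h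
      simpa [repairStep, hp] using h.trans hv
    · simp [repairStep, hp]

lemma bernExp_repairStep {S : PreqFin → ℝ≥0∞} (hS : IsSuperfarthingale S) {x : PreqFin}
    (p : unitInterval) {v : ℝ≥0∞} (hv : S x ≤ v) :
    bernExp p (repairStep S x p v) = v := by
  by_cases hp : (p : ℝ) = 0
  · simp [bernExp_of_eq_zero hp, repairStep, hp]
  · have hp' : ENNReal.ofReal p ≠ 0 := by
      rw [Ne, ENNReal.ofReal_eq_zero, not_le]
      exact lt_of_le_of_ne p.2.1 (Ne.symm hp)
    have hsub : (bernExp p fun y => S (x ++ [(p, y)])) ≤ v := (hS x p).trans hv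
    simp only [bernExp, repairStep, if_neg hp] at hsub ⊢
    rw [mul_add, ENNReal.mul_div_cancel hp' ENNReal.ofReal_ne_top, ← add_assoc,
      add_tsub_cancel_of_le hsub]

lemma le_repair {S : PreqFin → ℝ≥0∞} (hS : IsSuperfarthingale S) (x : PreqFin) :
    S x ≤ repair S x := by
  induction x using List.reverseRecOn with
  | nil => rw [repair_nil]
  | append_singleton x e ih =>
    rw [repair_append_singleton]
    exact le_repairStep hS ih e.2

lemma isFarthingale_repair {S : PreqFin → ℝ≥0∞} (hS : IsSuperfarthingale S) :
    IsFarthingale (repair S) := by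
  intro x p
  simp only [repair_append_singleton]
  exact (bernExp_repairStep hS p (le_repair hS x)).symm

lemma upProb_le_of_isSuperfarthingale {E : Set PreqInf} {S : PreqFin → ℝ≥0∞}
    (hS : IsSuperfarthingale S)
    (hE : ∀ π ∈ E, 1 ≤ limsup (fun n => S (prefixn π n)) atTop) : UpProb E ≤ S [] :=
  sInf_le ⟨repair S, isFarthingale_repair hS, repair_nil S, fun π hπ =>
    (hE π hπ).trans (limsup_le_limsup (Eventually.of_forall fun n => le_repair hS _))⟩

lemma upProb_mono {E F : Set PreqInf} (h : E ⊆ F) : UpProb E ≤ UpProb F :=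
  sInf_le_sInf fun _ ⟨V, hV, ha, hF⟩ => ⟨V, hV, ha, fun π hπ => hF π (h hπ)⟩

def seqPrefix {α : Type*} (y : ℕ → α) (n : ℕ) : List α := List.ofFn fun i : Fin n => y i

section seqPrefix

variable {α : Type*} (y : ℕ → α)

lemma prefixn_eq_seqPrefix : prefixn = seqPrefix := rfl

@[simp] lemma length_seqPrefix (n : ℕ) : (seqPrefix y n).length = n := by simp [seqPrefix]

lemma seqPrefix_succ (n : ℕ) : seqPrefix y (n + 1) = seqPrefix y n ++ [y n] := by
  rw [seqPrefix, List.ofFn_succ', List.concat_eq_append]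
  rfl

lemma take_seqPrefix {m n : ℕ} (h : m ≤ n) : (seqPrefix y n).take m = seqPrefix y m :=
  List.ext_getElem (by simp [h]) fun i _ _ => by simp [seqPrefix]

lemma seqPrefix_eq_seqPrefix_iff {z : ℕ → α} {n : ℕ} :
    seqPrefix y n = seqPrefix z n ↔ ∀ j < n, y j = z j := by
  simp [seqPrefix, List.ofFn_inj, funext_iff, Fin.forall_iff]

end seqPrefix

def prefixSet (E : Set PreqInf) (n : ℕ) : Set PreqFin := (prefixn · n) '' E

lemma prefixSet_mono {E F : Set PreqInf} (h : E ⊆ F) (n : ℕ) : prefixSet E n ⊆ prefixSet F n :=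
  Set.image_mono h

lemma mem_prefixSet_of_append_singleton {E : Set PreqInf} {n : ℕ} {x : PreqFin}
    {e : unitInterval × Bool} (h : x ++ [e] ∈ prefixSet E (n + 1)) : x ∈ prefixSet E n := by
  obtain ⟨π, hπ, hx⟩ := h
  refine ⟨π, hπ, List.append_inj_left' (t₁ := [π n]) (t₂ := [e]) ?_ rfl⟩
  exact (seqPrefix_succ π n).symm.trans hx

lemma indicator_one_le_one {α : Type*} (s : Set α) (a : α) : s.indicator (1 : α → ℝ≥0∞) a ≤ 1 :=
  Set.indicator_apply_le' (fun _ => le_rfl) fun _ => zero_le_one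

/-- The upper probability that the play, continued from `x` for `k` more rounds, lies in `B`. -/
def reachValue (B : Set PreqFin) : ℕ → PreqFin → ℝ≥0∞
  | 0, x => B.indicator 1 x
  | k + 1, x => ⨆ p, bernExp p fun y => reachValue B k (x ++ [(p, y)])

lemma reachValue_le_one (B : Set PreqFin) (k : ℕ) (x : PreqFin) : reachValue B k x ≤ 1 := by
  induction k generalizing x with
  | zero => exact indicator_one_le_one B x
  | succ k ih => exact iSup_le fun p => bernExp_le_of_le fun y => ih _

def reachSuper (B : Set PreqFin) (m : ℕ) (x : PreqFin) : ℝ≥0∞ :=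
  if x.length ≤ m then reachValue B (m - x.length) x else B.indicator 1 (x.take m)

lemma reachSuper_of_le_length {B : Set PreqFin} {m : ℕ} {x : PreqFin} (h : m ≤ x.length) :
    reachSuper B m x = B.indicator 1 (x.take m) := by
  rcases h.eq_or_lt with rfl | hlt
  · simp [reachSuper, reachValue]
  · simp [reachSuper, hlt.not_ge]

lemma isSuperfarthingale_reachSuper (B : Set PreqFin) (m : ℕ) :
    IsSuperfarthingale (reachSuper B m) := by
  intro x p
  rcases lt_or_ge x.length m with hlt | hge
  · have hk : m - x.length = m - (x.length + 1) + 1 := by omega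
    have hchild : ∀ y, reachSuper B m (x ++ [(p, y)]) =
        reachValue B (m - (x.length + 1)) (x ++ [(p, y)]) := fun y => by
      simp [reachSuper, show x.length + 1 ≤ m by omega]
    simp only [hchild]
    rw [reachSuper, if_pos hlt.le, hk, reachValue]
    exact le_iSup (fun p => bernExp p fun y => reachValue B _ (x ++ [(p, y)])) p
  · have hchild : ∀ y, reachSuper B m (x ++ [(p, y)]) = reachSuper B m x := fun y => by
      rw [reachSuper_of_le_length (by simp; omega), reachSuper_of_le_length hge,
        List.take_append_of_le_length hge]
    simp only [hchild, bernExp_const, le_rfl]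

lemma upProb_le_reachValue (E : Set PreqInf) (m : ℕ) :
    UpProb E ≤ reachValue (prefixSet E m) m [] := by
  have hE : ∀ π ∈ E, 1 ≤ limsup (fun n => reachSuper (prefixSet E m) m (prefixn π n)) atTop := by
    refine fun π hπ => le_limsup_of_frequently_le (Eventually.frequently ?_)
    filter_upwards [eventually_ge_atTop m] with n hn
    have hπm : prefixn π m ∈ prefixSet E m := ⟨π, hπ, rfl⟩
    rw [reachSuper_of_le_length (by simp [prefixn_eq_seqPrefix, hn]), prefixn_eq_seqPrefix,
      take_seqPrefix π hn, ← prefixn_eq_seqPrefix, Set.indicator_of_mem hπm, Pi.one_apply]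
  calc UpProb E ≤ reachSuper (prefixSet E m) m [] :=
        upProb_le_of_isSuperfarthingale (isSuperfarthingale_reachSuper _ m) hE
    _ = reachValue (prefixSet E m) m [] := by simp [reachSuper]

abbrev ForecastingSystem := List Bool → unitInterval

def play (φ : ForecastingSystem) (s : List Bool) : PreqFin :=
  List.ofFn fun i : Fin s.length => (φ (s.take i), s[(i : ℕ)])

section play

variable (φ : ForecastingSystem)

@[simp] lemma length_play (s : List Bool) : (play φ s).length = s.length := by simp [play]

@[simp] lemma play_nil : play φ [] = [] := rfl

lemma play_append_singleton (s : List Bool) (y : Bool) :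
    play φ (s ++ [y]) = play φ s ++ [(φ s, y)] := by
  refine List.ext_getElem (by simp) fun i h₁ _ => ?_
  simp only [length_play, List.length_append, List.length_singleton] at h₁
  rw [List.getElem_append]
  split_ifs with hi
  · simp only [length_play] at hi
    simp only [play, List.getElem_ofFn, List.take_append_of_le_length hi.le,
      List.getElem_append_left hi]
  · obtain rfl : i = s.length := by simp at hi; omega
    simp only [play, List.getElem_ofFn, List.take_left, List.getElem_concat_length,
      List.length_ofFn, Nat.sub_self, List.getElem_singleton]

lemma play_prefix {s t : List Bool} (h : s <+: t) : play φ s <+: play φ t := by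
  obtain ⟨u, rfl⟩ := h
  induction u using List.reverseRecOn with
  | nil => simp
  | append_singleton u y ih =>
    rw [← List.append_assoc, play_append_singleton]
    exact ih.trans (List.prefix_append _ _)

end play

def forecastExp (φ : ForecastingSystem) (g : List Bool → ℝ≥0∞) : ℕ → List Bool → ℝ≥0∞
  | 0, s => g s
  | k + 1, s => bernExp (φ s) fun y => forecastExp φ g k (s ++ [y])

section forecastExp

variable (φ : ForecastingSystem)

lemma forecastExp_mono {g h : List Bool → ℝ≥0∞} (hgh : ∀ t, g t ≤ h t) (k : ℕ) (s : List Bool) :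
    forecastExp φ g k s ≤ forecastExp φ h k s := by
  induction k generalizing s with
  | zero => exact hgh s
  | succ k ih => exact bernExp_mono _ fun y => ih _

lemma forecastExp_add (g h : List Bool → ℝ≥0∞) (k : ℕ) (s : List Bool) :
    forecastExp φ (fun t => g t + h t) k s = forecastExp φ g k s + forecastExp φ h k s := by
  induction k generalizing s with
  | zero => rfl
  | succ k ih => simp only [forecastExp, ih, bernExp_add]

lemma forecastExp_le_of_le {g : List Bool → ℝ≥0∞} {a : ℝ≥0∞} (hg : ∀ t, g t ≤ a) (k : ℕ)
    (s : List Bool) : forecastExp φ g k s ≤ a := by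
  induction k generalizing s with
  | zero => exact hg s
  | succ k ih => exact bernExp_le_of_le fun y => ih _

lemma forecastExp_of_forall_append {g : List Bool → ℝ≥0∞} {a : ℝ≥0∞} {s : List Bool}
    (hg : ∀ t, g (s ++ t) = a) (k : ℕ) : forecastExp φ g k s = a := by
  induction k generalizing s with
  | zero => simpa [forecastExp] using hg []
  | succ k ih =>
    have hy : ∀ y, forecastExp φ g k (s ++ [y]) = a := fun y =>
      ih fun t => by rw [List.append_assoc]; exact hg _
    simp only [forecastExp, hy, bernExp_const]

lemma exists_of_forecastExp_ne_zero {g : List Bool → ℝ≥0∞} {k : ℕ} {s : List Bool}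
    (h : forecastExp φ g k s ≠ 0) : ∃ t : List Bool, t.length = k ∧ g (s ++ t) ≠ 0 := by
  induction k generalizing s with
  | zero => exact ⟨[], rfl, by simpa [forecastExp] using h⟩
  | succ k ih =>
    obtain ⟨y, hy⟩ := exists_ne_zero_of_bernExp_ne_zero h
    obtain ⟨t, rfl, ht⟩ := ih hy
    exact ⟨y :: t, rfl, by simpa using ht⟩

lemma forecastExp_succ_le {g g' : List Bool → ℝ≥0∞} (hg : ∀ s y, g' (s ++ [y]) ≤ g s) (k : ℕ)
    (s : List Bool) : forecastExp φ g' (k + 1) s ≤ forecastExp φ g k s := by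
  induction k generalizing s with
  | zero => exact bernExp_le_of_le fun y => hg s y
  | succ k ih => exact bernExp_mono _ fun y => ih _

end forecastExp

def playProb (φ : ForecastingSystem) (B : Set PreqFin) (m : ℕ) : ℝ≥0∞ :=
  forecastExp φ ((play φ ⁻¹' B).indicator 1) m []

lemma playProb_le_one (φ : ForecastingSystem) (B : Set PreqFin) (m : ℕ) : playProb φ B m ≤ 1 :=
  forecastExp_le_of_le φ (indicator_one_le_one _) m []

lemma playProb_le_add_diff (φ : ForecastingSystem) (A B : Set PreqFin) (m : ℕ) :
    playProb φ B m ≤ playProb φ A m + playProb φ (B \ A) m := by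
  refine (forecastExp_mono φ (fun t => ?_) m []).trans_eq (forecastExp_add φ _ _ m [])
  by_cases hA : play φ t ∈ A <;> by_cases hB : play φ t ∈ B <;> simp [hA, hB]

lemma exists_play_mem_of_playProb_ne_zero {φ : ForecastingSystem} {B : Set PreqFin} {m : ℕ}
    (h : playProb φ B m ≠ 0) : ∃ s : List Bool, s.length = m ∧ play φ s ∈ B := by
  obtain ⟨s, hs, hB⟩ := exists_of_forecastExp_ne_zero φ h
  exact ⟨s, hs, by simpa using hB⟩

lemma playProb_prefixSet_succ_le {K : ℕ → Set PreqInf} (hK : Antitone K) (φ : ForecastingSystem)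
    (m : ℕ) : playProb φ (prefixSet (K (m + 1)) (m + 1)) (m + 1) ≤
      playProb φ (prefixSet (K m) m) m := by
  refine forecastExp_succ_le φ (fun s y => ?_) m []
  by_cases hs : play φ (s ++ [y]) ∈ prefixSet (K (m + 1)) (m + 1)
  · rw [play_append_singleton] at hs
    have hs' := prefixSet_mono (hK m.le_succ) m (mem_prefixSet_of_append_singleton hs)
    rw [Set.indicator_of_mem (show s ∈ play φ ⁻¹' prefixSet (K m) m from hs')]
    exact Set.indicator_le_self' (fun _ _ => bot_le) _
  · simp [hs]

lemma exists_iSup_le_add {ι : Type*} [Nonempty ι] {f : ι → ℝ≥0∞} (hf : ⨆ i, f i ≠ ∞)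
    {δ : ℝ≥0∞} (hδ : δ ≠ 0) : ∃ i, ⨆ i, f i ≤ f i + δ := by
  by_cases h0 : ⨆ i, f i = 0
  · exact ⟨Classical.arbitrary ι, by simp [h0]⟩
  · obtain ⟨i, hi⟩ := lt_iSup_iff.mp (ENNReal.sub_lt_self hf h0 hδ)
    exact ⟨i, tsub_le_iff_right.mp hi.le⟩

def rulePlay (ψ : PreqFin → unitInterval) (s : List Bool) : PreqFin :=
  s.reverseRecOn (motive := fun _ => PreqFin) [] fun _ y x => x ++ [(ψ x, y)]

def ruleForecast (ψ : PreqFin → unitInterval) : ForecastingSystem := fun s => ψ (rulePlay ψ s)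

lemma play_ruleForecast (ψ : PreqFin → unitInterval) (s : List Bool) :
    play (ruleForecast ψ) s = rulePlay ψ s := by
  induction s using List.reverseRecOn with
  | nil => simp [rulePlay]
  | append_singleton s y ih =>
    rw [play_append_singleton, ih]
    simp only [rulePlay, List.reverseRecOn_concat]
    rfl

lemma ruleForecast_apply (ψ : PreqFin → unitInterval) (s : List Bool) :
    ruleForecast ψ s = ψ (play (ruleForecast ψ) s) := by
  rw [play_ruleForecast]; rfl

lemma reachValue_le_forecastExp_add {B : Set PreqFin} {m : ℕ} {φ : ForecastingSystem}
    {δ : ℝ≥0∞} (hφ : ∀ s k, s.length + (k + 1) = m → reachValue B (k + 1) (play φ s) ≤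
      (bernExp (φ s) fun y => reachValue B k (play φ (s ++ [y]))) + δ)
    (k : ℕ) (s : List Bool) (hs : s.length + k = m) :
    reachValue B k (play φ s) ≤ forecastExp φ ((play φ ⁻¹' B).indicator 1) k s + k * δ := by
  induction k generalizing s with
  | zero =>
    by_cases h : play φ s ∈ B <;> simp [reachValue, forecastExp, h]
  | succ k ih =>
    calc reachValue B (k + 1) (play φ s)
        ≤ (bernExp (φ s) fun y => reachValue B k (play φ (s ++ [y]))) + δ := hφ s k hs
      _ ≤ (bernExp (φ s) fun y =>
            forecastExp φ ((play φ ⁻¹' B).indicator 1) k (s ++ [y]) + k * δ) + δ := by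
          gcongr
          exact bernExp_mono _ fun y => ih _ (by simp; omega)
      _ = forecastExp φ ((play φ ⁻¹' B).indicator 1) (k + 1) s + (k + 1 : ℕ) * δ := by
          rw [bernExp_add, bernExp_const, forecastExp]
          push_cast
          ring

lemma reachValue_le_iSup_playProb (B : Set PreqFin) (m : ℕ) :
    reachValue B m [] ≤ ⨆ φ, playProb φ B m := by
  refine ENNReal.le_of_forall_pos_le_add fun ε hε _ => ?_
  have hδ : (ε : ℝ≥0∞) / m ≠ 0 := by simp [hε.ne']
  have hfin : ∀ k x, reachValue B (k + 1) x ≠ ∞ := fun k x =>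
    ne_top_of_le_ne_top ENNReal.one_ne_top (reachValue_le_one B _ x)
  -- an `ε / m`-optimal forecast at every node, followed along its own play
  choose ψ hψ using fun x : PreqFin => exists_iSup_le_add (hfin (m - x.length - 1) x) hδ
  refine (reachValue_le_forecastExp_add (B := B) (m := m) (φ := ruleForecast ψ) (δ := ε / m)
    (fun s k hs => ?_) m [] (by simp)).trans ?_
  · obtain rfl : k = m - (play (ruleForecast ψ) s).length - 1 := by simp; omega
    simp only [play_append_singleton, ruleForecast_apply ψ s]
    exact hψ _
  · exact add_le_add (le_iSup (playProb · B m) _) ENNReal.mul_div_le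

lemma upperSemicontinuous_mul_of_continuous {α : Type*} [TopologicalSpace α] {f g : α → ℝ≥0∞}
    (hf : Continuous f) (hf_top : ∀ x, f x ≠ ∞) (hg : UpperSemicontinuous g)
    (hg_top : ∀ x, g x ≠ ∞) : UpperSemicontinuous fun x => f x * g x := by
  refine upperSemicontinuous_iff_limsup_le.mpr fun x => ?_
  have hfx : limsup f (𝓝 x) = f x := (hf.tendsto x).limsup_eq
  calc limsup (fun x => f x * g x) (𝓝 x) ≤ limsup f (𝓝 x) * limsup g (𝓝 x) :=
        ENNReal.limsup_mul_le' (.inr (ne_top_of_le_ne_top (hg_top x) (hg.limsup_le x)))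
          (.inl (hfx ▸ hf_top x))
    _ ≤ f x * g x := by
        rw [hfx]
        gcongr
        exact hg.limsup_le x

lemma upperSemicontinuous_forecastExp {G : ForecastingSystem → List Bool → ℝ≥0∞}
    (hG : ∀ t, UpperSemicontinuous (G · t)) (hG_le : ∀ φ t, G φ t ≤ 1) (k : ℕ) (s : List Bool) :
    UpperSemicontinuous fun φ => forecastExp φ (G φ) k s := by
  induction k generalizing s with
  | zero => exact hG s
  | succ k ih =>
    have hfin : ∀ y φ, forecastExp φ (G φ) k (s ++ [y]) ≠ ∞ := fun y φ =>
      ne_top_of_le_ne_top ENNReal.one_ne_top (forecastExp_le_of_le φ (hG_le φ) k _)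
    have hw₀ : Continuous fun φ : ForecastingSystem => ENNReal.ofReal (1 - φ s) :=
      ENNReal.continuous_ofReal.comp (by fun_prop)
    have hw₁ : Continuous fun φ : ForecastingSystem => ENNReal.ofReal (φ s) :=
      ENNReal.continuous_ofReal.comp (by fun_prop)
    exact (upperSemicontinuous_mul_of_continuous hw₀ (fun _ => ENNReal.ofReal_ne_top) (ih _)
      (hfin false)).add
      (upperSemicontinuous_mul_of_continuous hw₁ (fun _ => ENNReal.ofReal_ne_top) (ih _)
        (hfin true))

lemma upperSemicontinuous_playProb {B : Set PreqFin}
    (hB : ∀ s, IsClosed {φ : ForecastingSystem | play φ s ∈ B}) (m : ℕ) :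
    UpperSemicontinuous (playProb · B m) := by
  refine upperSemicontinuous_forecastExp (fun t => ?_) (fun φ t => ?_) m []
  · convert (hB t).upperSemicontinuous_indicator (zero_le_one (α := ℝ≥0∞)) using 1
    funext φ
    by_cases h : play φ t ∈ B <;> simp [h]
  · exact indicator_one_le_one _ t

lemma length_of_mem_prefixSet {E : Set PreqInf} {n : ℕ} {x : PreqFin} (h : x ∈ prefixSet E n) :
    x.length = n := by
  obtain ⟨π, -, rfl⟩ := h
  simp [prefixn_eq_seqPrefix]

lemma isClosed_setOf_play_mem_prefixSet {K : Set PreqInf} (hK : IsCompact K) (m : ℕ)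
    (s : List Bool) : IsClosed {φ : ForecastingSystem | play φ s ∈ prefixSet K m} := by
  by_cases hs : s.length = m
  · subst hs
    have hset : {φ : ForecastingSystem | play φ s ∈ prefixSet K s.length} =
        (fun φ (i : Fin s.length) => (φ (s.take i), s[(i : ℕ)])) ⁻¹'
          ((fun π (i : Fin s.length) => π i) '' K) := by
      ext φ
      simp [prefixSet, prefixn, play, List.ofFn_inj]
    rw [hset]
    exact (hK.image (by fun_prop)).isClosed.preimage (by fun_prop)
  · convert isClosed_empty
    ext φ
    simpa using fun h => hs (by simpa using length_of_mem_prefixSet h)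

lemma exists_forall_le_playProb {K : ℕ → Set PreqInf} (hcompact : ∀ i, IsCompact (K i))
    (hK : Antitone K) {t : ℝ≥0∞} (h : ∀ m, ∃ φ, t ≤ playProb φ (prefixSet (K m) m) m) :
    ∃ φ, ∀ m, t ≤ playProb φ (prefixSet (K m) m) m := by
  have hclosed : ∀ m, IsClosed {φ | t ≤ playProb φ (prefixSet (K m) m) m} := fun m =>
    (upperSemicontinuous_playProb (isClosed_setOf_play_mem_prefixSet (hcompact m) m) m
      ).isClosed_preimage t
  obtain ⟨φ, hφ⟩ := IsCompact.nonempty_iInter_of_sequence_nonempty_isCompact_isClosed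
    (fun m => {φ | t ≤ playProb φ (prefixSet (K m) m) m})
    (fun m φ hφ => hφ.trans (playProb_prefixSet_succ_le hK φ m)) h (hclosed 0).isCompact hclosed
  exact ⟨φ, fun m => Set.mem_iInter.mp hφ m⟩

def ExceedsAlong (V : PreqFin → ℝ≥0∞) (c : ℝ≥0∞) (z : PreqFin) : Prop :=
  ∃ w, w <+: z ∧ c < V w

section ExceedsAlong

variable {V : PreqFin → ℝ≥0∞} {c : ℝ≥0∞}

lemma ExceedsAlong.mono {z z' : PreqFin} (h : ExceedsAlong V c z) (hz : z <+: z') :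
    ExceedsAlong V c z' :=
  let ⟨w, hw, hc⟩ := h
  ⟨w, hw.trans hz, hc⟩

lemma exceedsAlong_nil : ExceedsAlong V c [] ↔ c < V [] := by
  simp [ExceedsAlong]

lemma exceedsAlong_append_singleton {z : PreqFin} {e : unitInterval × Bool} :
    ExceedsAlong V c (z ++ [e]) ↔ ExceedsAlong V c z ∨ c < V (z ++ [e]) := by
  simp only [ExceedsAlong, List.prefix_concat_iff, or_and_right, exists_or, exists_eq_left]
  exact or_comm

lemma mul_forecastExp_exceedsAlong_le (hV : IsFarthingale V) (φ : ForecastingSystem) (k : ℕ)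
    {s : List Bool} (hs : ¬ ExceedsAlong V c (play φ s)) :
    c * forecastExp φ ((play φ ⁻¹' {z | ExceedsAlong V c z}).indicator 1) k s ≤ V (play φ s) := by
  induction k generalizing s with
  | zero => simp [forecastExp, hs]
  | succ k ih =>
    have hVs : V (play φ s) = bernExp (φ s) fun y => V (play φ (s ++ [y])) := by
      simp only [play_append_singleton]
      exact hV _ _
    rw [forecastExp, mul_bernExp, hVs]
    refine bernExp_mono _ fun y => ?_
    by_cases hy : ExceedsAlong V c (play φ (s ++ [y]))
    · have hall : ∀ t, (play φ ⁻¹' {z | ExceedsAlong V c z}).indicator 1 (s ++ [y] ++ t) =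
          (1 : ℝ≥0∞) := fun t =>
        Set.indicator_of_mem (show s ++ [y] ++ t ∈ play φ ⁻¹' {z | ExceedsAlong V c z} from
          hy.mono (play_prefix φ (List.prefix_append _ _))) 1
      rw [forecastExp_of_forall_append φ hall, mul_one, play_append_singleton]
      rw [play_append_singleton, exceedsAlong_append_singleton] at hy
      exact (hy.resolve_left hs).le
    · exact ih hy

lemma mul_playProb_exceedsAlong_le (hV : IsFarthingale V) (φ : ForecastingSystem) (m : ℕ) :
    c * playProb φ {z | ExceedsAlong V c z} m ≤ V [] := by
  by_cases h : c < V []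
  · calc c * playProb φ {z | ExceedsAlong V c z} m ≤ c * 1 := by
          gcongr
          exact playProb_le_one φ _ m
      _ ≤ V [] := by rw [mul_one]; exact h.le
  · exact mul_forecastExp_exceedsAlong_le hV φ m (s := []) (by simpa [exceedsAlong_nil] using h)

end ExceedsAlong

/-- König's lemma, via compactness of `α^ℕ`. -/
lemma exists_seq_forall_seqPrefix {α : Type*} [Finite α] {P : List α → Prop}
    (hP : ∀ s a, P (s ++ [a]) → P s) (h : ∀ n, ∃ s : List α, s.length = n ∧ P s) :
    ∃ y : ℕ → α, ∀ n, P (seqPrefix y n) := by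
  obtain ⟨s₁, hs₁, -⟩ := h 1
  have : Nonempty α := ⟨s₁.head (List.ne_nil_of_length_eq_add_one hs₁)⟩
  let _ : TopologicalSpace α := ⊥
  have _ : DiscreteTopology α := ⟨rfl⟩
  have hclosed : ∀ n, IsClosed {y : ℕ → α | P (seqPrefix y n)} := fun n =>
    IsClosed.preimage (f := fun (y : ℕ → α) (i : Fin n) => y i)
      (continuous_pi fun i => continuous_apply (i : ℕ)) (isClosed_discrete {f | P (List.ofFn f)})
  have hne : ∀ n, {y : ℕ → α | P (seqPrefix y n)}.Nonempty := fun n => by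
    obtain ⟨s, rfl, hs⟩ := h n
    have hs' : seqPrefix (fun i => s.getD i (Classical.arbitrary α)) s.length = s :=
      List.ext_getElem (by simp) fun i _ _ => by simp [seqPrefix]
    exact ⟨_, show P _ by rwa [hs']⟩
  obtain ⟨y, hy⟩ := IsCompact.nonempty_iInter_of_sequence_nonempty_isCompact_isClosed _
    (fun n y hy => hP _ (y n) (by rw [← seqPrefix_succ]; exact hy)) hne
    (hclosed 0).isCompact hclosed
  exact ⟨y, fun n => Set.mem_iInter.mp hy n⟩

lemma mem_of_eventually_prefixn_mem {K : Set PreqInf} (hK : IsClosed K) {π : PreqInf}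
    (h : ∀ᶠ n in atTop, prefixn π n ∈ prefixSet K n) : π ∈ K := by
  have hρ : ∀ n, ∃ ρ : PreqInf, prefixn π n ∈ prefixSet K n → ρ ∈ K ∧ prefixn ρ n = prefixn π n :=
    fun n => by
      by_cases hn : prefixn π n ∈ prefixSet K n
      · obtain ⟨ρ, hρ, hρπ⟩ := hn
        exact ⟨ρ, fun _ => ⟨hρ, hρπ⟩⟩
      · exact ⟨π, fun h => absurd h hn⟩
  choose ρ hρ using hρ
  refine hK.mem_of_tendsto (tendsto_pi_nhds.2 fun j => tendsto_nhds_of_eventually_eq ?_)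
    (h.mono fun n hn => (hρ n hn).1)
  filter_upwards [h, eventually_gt_atTop j] with n hn hjn
  exact (seqPrefix_eq_seqPrefix_iff _).mp (hρ n hn).2 j hjn

def seqPlay (φ : ForecastingSystem) (y : ℕ → Bool) : PreqInf := fun n => (φ (seqPrefix y n), y n)

lemma prefixn_seqPlay (φ : ForecastingSystem) (y : ℕ → Bool) (n : ℕ) :
    prefixn (seqPlay φ y) n = play φ (seqPrefix y n) := by
  induction n with
  | zero => rfl
  | succ n ih =>
    rw [prefixn_eq_seqPrefix, seqPrefix_succ, ← prefixn_eq_seqPrefix, ih, seqPrefix_succ,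
      play_append_singleton]
    rfl

lemma exists_playProb_diff_eq_zero {K : ℕ → Set PreqInf} (hclosed : ∀ i, IsClosed (K i))
    (hK : Antitone K) {V : PreqFin → ℝ≥0∞}
    (hV : ∀ π ∈ ⋂ i, K i, 1 ≤ limsup (fun n => V (prefixn π n)) atTop) {c : ℝ≥0∞} (hc : c < 1)
    (φ : ForecastingSystem) :
    ∃ m, playProb φ (prefixSet (K m) m \ {z | ExceedsAlong V c z}) m = 0 := by
  by_contra! h
  have hsnoc : ∀ s b, play φ (s ++ [b]) ∈ prefixSet (K (s ++ [b]).length) (s ++ [b]).length ∧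
      ¬ ExceedsAlong V c (play φ (s ++ [b])) →
      play φ s ∈ prefixSet (K s.length) s.length ∧ ¬ ExceedsAlong V c (play φ s) := by
    rintro s b ⟨hs, hexc⟩
    simp only [List.length_append, List.length_singleton, play_append_singleton] at hs hexc
    exact ⟨prefixSet_mono (hK s.length.le_succ) _ (mem_prefixSet_of_append_singleton hs),
      fun h' => hexc (h'.mono (List.prefix_append _ _))⟩
  have hne : ∀ m, ∃ s : List Bool, s.length = m ∧
      play φ s ∈ prefixSet (K s.length) s.length ∧ ¬ ExceedsAlong V c (play φ s) := fun m => by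
    obtain ⟨s, rfl, hmem, hexc⟩ := exists_play_mem_of_playProb_ne_zero (h m)
    exact ⟨s, rfl, hmem, hexc⟩
  obtain ⟨y, hy⟩ := exists_seq_forall_seqPrefix hsnoc hne
  have hmem : seqPlay φ y ∈ ⋂ i, K i := Set.mem_iInter.2 fun i =>
    mem_of_eventually_prefixn_mem (hclosed i) <| by
      filter_upwards [eventually_ge_atTop i] with n hn
      rw [prefixn_seqPlay]
      exact prefixSet_mono (hK hn) n (by simpa using (hy n).1)
  obtain ⟨n, hn⟩ :=
    (frequently_lt_of_lt_limsup (by isBoundedDefault) (hc.trans_le (hV _ hmem))).exists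
  exact (hy n).2 ⟨_, List.prefix_refl _, by rwa [← prefixn_seqPlay]⟩

lemma mul_le_of_forall_le_playProb {K : ℕ → Set PreqInf} (hclosed : ∀ i, IsClosed (K i))
    (hK : Antitone K) {V : PreqFin → ℝ≥0∞} (hV : IsFarthingale V)
    (hsucc : ∀ π ∈ ⋂ i, K i, 1 ≤ limsup (fun n => V (prefixn π n)) atTop) {c : ℝ≥0∞}
    (hc : c < 1) {φ : ForecastingSystem} {t : ℝ≥0∞}
    (ht : ∀ m, t ≤ playProb φ (prefixSet (K m) m) m) : c * t ≤ V [] := by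
  obtain ⟨m, hm⟩ := exists_playProb_diff_eq_zero hclosed hK hsucc hc φ
  calc c * t ≤ c * playProb φ (prefixSet (K m) m) m := by gcongr; exact ht m
    _ ≤ c * (playProb φ {z | ExceedsAlong V c z} m +
          playProb φ (prefixSet (K m) m \ {z | ExceedsAlong V c z}) m) := by
        gcongr
        exact playProb_le_add_diff φ _ _ m
    _ = c * playProb φ {z | ExceedsAlong V c z} m := by rw [hm, add_zero]
    _ ≤ V [] := mul_playProb_exceedsAlong_le hV φ m

lemma iInf_upProb_le {K : ℕ → Set PreqInf} (hcompact : ∀ i, IsCompact (K i)) (hK : Antitone K) :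
    ⨅ i, UpProb (K i) ≤ UpProb (⋂ i, K i) := by
  refine le_sInf ?_
  rintro _ ⟨V, hV, rfl, hsucc⟩
  refine le_of_forall_lt_imp_le_of_dense fun t ht =>
    ENNReal.le_of_forall_lt_one_mul_le fun c hc => ?_
  have h : ∀ m, ∃ φ, t ≤ playProb φ (prefixSet (K m) m) m := fun m => by
    have hlt := ht.trans_le ((iInf_le _ m).trans
      ((upProb_le_reachValue _ m).trans (reachValue_le_iSup_playProb _ m)))
    obtain ⟨φ, hφ⟩ := lt_iSup_iff.mp hlt
    exact ⟨φ, hφ.le⟩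
  obtain ⟨φ, hφ⟩ := exists_forall_le_playProb hcompact hK h
  exact mul_le_of_forall_le_playProb (fun i => (hcompact i).isClosed) hK hV hsucc hc hφ

end Prequential

/-- Upper game-theoretic probability is continuous from above on compact sets:
for a decreasing sequence of compact subsets of Π (with its product topology),
UpProb(⋂ᵢ Kᵢ) = limᵢ UpProb(Kᵢ). -/
theorem upProb_continuous_from_above_on_compacts (K : ℕ → Set PreqInf)
    (hcompact : ∀ i, IsCompact (K i)) (hK : Antitone K) :
    Filter.Tendsto (fun i => UpProb (K i)) Filter.atTop
      (nhds (UpProb (⋂ i, K i))) := by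
  convert tendsto_atTop_iInf fun i j hij => Prequential.upProb_mono (hK hij) using 2
  exact le_antisymm (le_iInf fun i => Prequential.upProb_mono (Set.iInter_subset K i))
    (Prequential.iInf_upProb_le hcompact hK)
end
end

section
/- The set function UpProbMeas(E) := sup_φ Prob_φ*({ω : ω^φ ∈ E}) on subsets of Π is a Choquet capacity. -/
open Filter Topology MeasureTheory
open scoped ENNReal NNReal unitInterval

noncomputable section

namespace Cap

/-! ### Weights, products and intervals -/

def wt (ψ : ForecastingSystem) (x : List Bool) (b : Bool) : ℝ :=
  if b then (ψ x : ℝ) else 1 - (ψ x : ℝ)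

lemma wt_nonneg (ψ : ForecastingSystem) (x : List Bool) (b : Bool) : 0 ≤ wt ψ x b := by
  rcases b with _|_ <;> simp [wt] <;> first
    | linarith [(ψ x).2.2] | linarith [(ψ x).2.1]

def Pw (ψ : ForecastingSystem) (x : List Bool) : ℝ :=
  ∏ i ∈ Finset.range x.length, wt ψ (x.take i) (x.getD i false)

@[simp] lemma Pw_nil (ψ : ForecastingSystem) : Pw ψ [] = 1 := by simp [Pw]

lemma Pw_append (ψ : ForecastingSystem) (x : List Bool) (b : Bool) :
    Pw ψ (x ++ [b]) = Pw ψ x * wt ψ x b := by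
  unfold Pw
  rw [List.length_append, List.length_singleton, Finset.prod_range_succ]
  congr 1
  · refine Finset.prod_congr rfl fun i hi => ?_
    rw [Finset.mem_range] at hi
    rw [List.take_append_of_le_length (le_of_lt hi), List.getD_append _ _ _ _ hi]
  · rw [List.take_left, List.getD_append_right _ _ _ _ le_rfl]
    simp

lemma Pw_nonneg (ψ : ForecastingSystem) (x : List Bool) : 0 ≤ Pw ψ x :=
  Finset.prod_nonneg fun i _ => wt_nonneg ψ _ _

def loI (ψ : ForecastingSystem) (x : List Bool) : ℝ :=
  ∑ i ∈ Finset.range x.length,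
    if x.getD i false then 0 else (ψ (x.take i) : ℝ) * Pw ψ (x.take i)

@[simp] lemma loI_nil (ψ : ForecastingSystem) : loI ψ [] = 0 := by simp [loI]

lemma loI_append (ψ : ForecastingSystem) (x : List Bool) (b : Bool) :
    loI ψ (x ++ [b]) = loI ψ x + if b then 0 else (ψ x : ℝ) * Pw ψ x := by
  unfold loI
  rw [List.length_append, List.length_singleton, Finset.sum_range_succ]
  congr 1
  · refine Finset.sum_congr rfl fun i hi => ?_
    rw [Finset.mem_range] at hi
    rw [List.take_append_of_le_length (le_of_lt hi), List.getD_append _ _ _ _ hi]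
  · rw [List.take_left, List.getD_append_right _ _ _ _ le_rfl]
    simp

/-- The half-open interval attached to a finite binary string. -/
def IcoOf (ψ : ForecastingSystem) (x : List Bool) : Set ℝ :=
  Set.Ico (loI ψ x) (loI ψ x + Pw ψ x)

lemma IcoOf_subset (ψ : ForecastingSystem) (x : List Bool) (b : Bool) :
    IcoOf ψ (x ++ [b]) ⊆ IcoOf ψ x := by
  have h0 : (0:ℝ) ≤ (ψ x : ℝ) := (ψ x).2.1
  have h1 : (ψ x : ℝ) ≤ 1 := (ψ x).2.2
  have hP := Pw_nonneg ψ x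
  apply Set.Ico_subset_Ico <;>
    rcases b with _|_ <;> simp [loI_append, Pw_append, wt] <;> nlinarith

lemma IcoOf_subset_unit (ψ : ForecastingSystem) (x : List Bool) :
    IcoOf ψ x ⊆ Set.Ico (0:ℝ) 1 := by
  induction x using List.reverseRecOn with
  | nil => simp [IcoOf]
  | append_singleton y b ih => exact (IcoOf_subset ψ y b).trans ih

/-! ### The binary expansion map -/

/-- Threshold separating the `true` branch from the `false` branch. -/
def thr (ψ : ForecastingSystem) (x : List Bool) : ℝ := loI ψ x + (ψ x : ℝ) * Pw ψ x

def bits (ψ : ForecastingSystem) (u : ℝ) : ℕ → List Bool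
  | 0 => []
  | n+1 => bits ψ u n ++ [decide (u < thr ψ (bits ψ u n))]

def gmap (ψ : ForecastingSystem) (u : ℝ) : BinSeq := fun n => decide (u < thr ψ (bits ψ u n))

lemma bits_succ (ψ : ForecastingSystem) (u : ℝ) (n : ℕ) :
    bits ψ u (n+1) = bits ψ u n ++ [gmap ψ u n] := rfl

@[simp] lemma bprefix_zero (ω : BinSeq) : bprefix ω 0 = [] := rfl

lemma bprefix_succ (ω : BinSeq) (n : ℕ) : bprefix ω (n+1) = bprefix ω n ++ [ω n] := by
  rw [bprefix, List.ofFn_succ', List.concat_eq_append]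
  rfl

@[simp] lemma bprefix_length (ω : BinSeq) (n : ℕ) : (bprefix ω n).length = n := by
  simp [bprefix]

lemma bprefix_eq_iff {ω' ω : BinSeq} {n : ℕ} :
    bprefix ω' n = bprefix ω n ↔ ∀ i < n, ω' i = ω i := by
  constructor
  · intro h i hi
    have := List.ofFn_inj.mp h
    exact congrFun this ⟨i, hi⟩
  · intro h
    exact List.ofFn_inj.mpr (funext fun i => h i i.isLt)

lemma bprefix_gmap (ψ : ForecastingSystem) (u : ℝ) (n : ℕ) :
    bprefix (gmap ψ u) n = bits ψ u n := by
  induction n with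
  | zero => rfl
  | succ n ih => rw [bprefix_succ, ih, bits_succ]

lemma mem_IcoOf_bits (ψ : ForecastingSystem) {u : ℝ} (hu : u ∈ Set.Ico (0:ℝ) 1) (n : ℕ) :
    u ∈ IcoOf ψ (bits ψ u n) := by
  induction n with
  | zero => simpa [IcoOf, bits, loI_nil, Pw_nil] using hu
  | succ n ih =>
    rw [bits]
    set x := bits ψ u n with hx
    rcases lt_or_ge u (thr ψ x) with h | h
    · have : decide (u < thr ψ x) = true := decide_eq_true h
      rw [this]
      constructor
      · rw [loI_append]; simpa using ih.1
      · rw [loI_append, Pw_append, wt]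
        simpa [thr, mul_comm] using h
    · have : decide (u < thr ψ x) = false := decide_eq_false (not_lt.mpr h)
      rw [this]
      constructor
      · rw [loI_append]; simpa [thr] using h
      · rw [loI_append, Pw_append, wt]
        have := ih.2
        simp only [if_neg Bool.false_ne_true, Bool.false_eq_true, if_false]
        ring_nf
        ring_nf at this
        linarith

lemma bits_eq_of_mem (ψ : ForecastingSystem) {u : ℝ} : ∀ (n : ℕ) (x : List Bool),
    x.length = n → u ∈ IcoOf ψ x → bits ψ u n = x := by
  intro n
  induction n with
  | zero => intro x hx _; rw [List.length_eq_zero_iff] at hx; simp [bits, hx]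
  | succ n ih =>
    intro x hx hu
    have hne : x ≠ [] := by intro h; rw [h] at hx; simp at hx
    obtain ⟨y, b, rfl⟩ : ∃ y b, x = y ++ [b] := by
      rcases List.eq_nil_or_concat x with h | ⟨y, b, h⟩
      · exact absurd h hne
      · exact ⟨y, b, by simpa [List.concat_eq_append] using h⟩
    have hy : y.length = n := by simpa using hx
    have huy : u ∈ IcoOf ψ y := IcoOf_subset ψ y b hu
    have hb : decide (u < thr ψ y) = b := by
      rcases b with _|_
      · apply decide_eq_false
        have := hu.1
        rw [loI_append] at this
        simp only [Bool.false_eq_true, if_false] at this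
        simpa [thr, not_lt] using this
      · apply decide_eq_true
        have := hu.2
        rw [loI_append, Pw_append, wt] at this
        simpa [thr, mul_comm] using this
    rw [bits, ih y hy huy, hb]

/-! ### Prefix sets: topology and measurability -/

lemma append_singleton_inj {x y : List Bool} {a b : Bool} (h : x ++ [a] = y ++ [b]) :
    x = y ∧ a = b := by
  have := List.append_inj h (by
    have := congrArg List.length h
    simpa using this)
  simpa using this

lemma prefSet_props (n : ℕ) (x : List Bool) :
    IsOpen {ω : BinSeq | bprefix ω n = x} ∧ IsClosed {ω : BinSeq | bprefix ω n = x} ∧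
      MeasurableSet {ω : BinSeq | bprefix ω n = x} := by
  induction n generalizing x with
  | zero =>
    rcases x with _ | ⟨b, y⟩
    · simp only [bprefix]; simp
    · have : {ω : BinSeq | bprefix ω 0 = b :: y} = ∅ := by
        ext ω; simp [bprefix]
      rw [this]; simp
  | succ n ih =>
    rcases List.eq_nil_or_concat x with rfl | ⟨y, b, rfl⟩
    · have : {ω : BinSeq | bprefix ω (n+1) = []} = ∅ := by
        ext ω
        simp only [Set.mem_setOf_eq, Set.mem_empty_iff_false, iff_false]
        intro h
        have := congrArg List.length h
        simp [bprefix_length] at this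
      rw [this]; simp
    · rw [List.concat_eq_append]
      have hset : {ω : BinSeq | bprefix ω (n+1) = y ++ [b]} =
          {ω : BinSeq | bprefix ω n = y} ∩ {ω : BinSeq | ω n = b} := by
        ext ω
        simp only [Set.mem_setOf_eq, Set.mem_inter_iff, bprefix_succ]
        constructor
        · intro h; exact append_singleton_inj h
        · rintro ⟨h1, h2⟩; rw [h1, h2]
      have hob : IsOpen {ω : BinSeq | ω n = b} := by
        have : {ω : BinSeq | ω n = b} = (fun ω : BinSeq => ω n) ⁻¹' {b} := rfl
        rw [this]
        exact (continuous_apply n).isOpen_preimage _ (isOpen_discrete _)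
      have hcb : IsClosed {ω : BinSeq | ω n = b} := by
        have : {ω : BinSeq | ω n = b} = (fun ω : BinSeq => ω n) ⁻¹' {b} := rfl
        rw [this]
        exact IsClosed.preimage (continuous_apply n) (isClosed_discrete _)
      have hmb : MeasurableSet {ω : BinSeq | ω n = b} := by
        have : {ω : BinSeq | ω n = b} = (fun ω : BinSeq => ω n) ⁻¹' {b} := rfl
        rw [this]
        exact measurable_pi_apply n (measurableSet_singleton b)
      rw [hset]
      exact ⟨(ih y).1.inter hob, (ih y).2.1.inter hcb, (ih y).2.2.inter hmb⟩

lemma measurableSet_cyl (x : List Bool) : MeasurableSet (cyl x) :=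
  (prefSet_props x.length x).2.2

lemma cyl_nil : cyl [] = Set.univ := by
  ext ω; simp [cyl, bprefix]

lemma cyl_append (x : List Bool) (b : Bool) :
    cyl (x ++ [b]) = cyl x ∩ {ω : BinSeq | ω x.length = b} := by
  ext ω
  simp only [cyl, List.length_append, List.length_singleton, Set.mem_setOf_eq,
    Set.mem_inter_iff, bprefix_succ]
  constructor
  · intro h; exact append_singleton_inj h
  · rintro ⟨h1, h2⟩; rw [h1, h2]

/-! ### Cylinder values of any forecast measure -/

lemma IFM_cyl {ψ : ForecastingSystem} {μ : Measure BinSeq}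
    (h : IsForecastMeasure ψ μ) :
    ∀ x, μ (cyl x) = ENNReal.ofReal (Pw ψ x) := by
  intro x
  induction x using List.reverseRecOn with
  | nil => rw [cyl_nil, Pw_nil]; have := h.1; simp
  | append_singleton y b ih =>
    have htrue : μ (cyl (y ++ [true])) = ENNReal.ofReal (Pw ψ (y ++ [true])) := by
      rw [h.2 y, ih, ← ENNReal.ofReal_mul (ψ y).2.1, Pw_append]
      simp [wt, mul_comm]
    rcases b with _|_
    · have hsplit : cyl y = cyl (y ++ [true]) ∪ cyl (y ++ [false]) := by
        rw [cyl_append, cyl_append, ← Set.inter_union_distrib_left]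
        have : {ω : BinSeq | ω y.length = true} ∪ {ω : BinSeq | ω y.length = false} =
            Set.univ := by
          ext ω; simp only [Set.mem_union, Set.mem_setOf_eq, Set.mem_univ, iff_true]
          rcases Bool.dichotomy (ω y.length) with h'|h' <;> [right;left] <;> exact h'
        rw [this, Set.inter_univ]
      have hdisj : Disjoint (cyl (y ++ [true])) (cyl (y ++ [false])) := by
        rw [cyl_append, cyl_append]
        apply Set.disjoint_left.mpr
        rintro ω ⟨_, h1⟩ ⟨_, h2⟩
        simp only [Set.mem_setOf_eq] at h1 h2
        rw [h1] at h2; exact absurd h2 (by simp)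
      have hadd : μ (cyl y) = μ (cyl (y ++ [true])) + μ (cyl (y ++ [false])) := by
        rw [hsplit]
        exact measure_union hdisj (measurableSet_cyl _)
      have hfin : μ (cyl (y ++ [true])) ≠ ⊤ := by
        rw [htrue]; exact ENNReal.ofReal_ne_top
      have h5 : μ (cyl (y ++ [false])) = μ (cyl y) - μ (cyl (y ++ [true])) := by
        rw [hadd]; rw [ENNReal.add_sub_cancel_left hfin]
      have hnn : 0 ≤ Pw ψ (y ++ [true]) := Pw_nonneg ψ _
      rw [h5, ih, htrue, ← ENNReal.ofReal_sub _ hnn, Pw_append, Pw_append]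
      congr 1
      simp only [wt, if_pos, Bool.false_eq_true, if_false, if_true]
      ring
    · exact htrue

/-! ### Existence of the forecast measure -/

lemma measurableSet_bits (ψ : ForecastingSystem) (n : ℕ) (x : List Bool) :
    MeasurableSet {u : ℝ | bits ψ u n = x} := by
  induction n generalizing x with
  | zero =>
    by_cases h : x = []
    · have : {u : ℝ | bits ψ u 0 = x} = Set.univ := by
        ext u; simp [bits, h.symm]
      rw [this]; exact MeasurableSet.univ
    · have : {u : ℝ | bits ψ u 0 = x} = ∅ := by
        ext u; simp only [Set.mem_setOf_eq, Set.mem_empty_iff_false, iff_false, bits]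
        exact fun hc => h hc.symm
      rw [this]; exact MeasurableSet.empty
  | succ n ih =>
    rcases List.eq_nil_or_concat x with rfl | ⟨y, b, rfl⟩
    · have : {u : ℝ | bits ψ u (n+1) = []} = ∅ := by
        ext u; simp [bits]
      rw [this]; exact MeasurableSet.empty
    · rw [List.concat_eq_append]
      have hset : {u : ℝ | bits ψ u (n+1) = y ++ [b]} =
          {u : ℝ | bits ψ u n = y} ∩ {u : ℝ | decide (u < thr ψ y) = b} := by
        ext u
        simp only [Set.mem_setOf_eq, Set.mem_inter_iff, bits]
        constructor
        · intro h
          obtain ⟨h1, h2⟩ := append_singleton_inj h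
          exact ⟨h1, by rw [← h1]; exact h2⟩
        · rintro ⟨h1, h2⟩; rw [h1, h2]
      rw [hset]
      refine (ih y).inter ?_
      rcases b with _|_
      · have : {u : ℝ | decide (u < thr ψ y) = false} = (Set.Iio (thr ψ y))ᶜ := by
          ext u; simp [Set.mem_Iio]
        rw [this]
        exact measurableSet_Iio.compl
      · have : {u : ℝ | decide (u < thr ψ y) = true} = Set.Iio (thr ψ y) := by
          ext u; simp [Set.mem_Iio]
        rw [this]; exact measurableSet_Iio

lemma measurable_gmap (ψ : ForecastingSystem) : Measurable (gmap ψ) := by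
  apply measurable_pi_lambda
  intro n
  apply measurable_to_countable'
  intro b
  have heq : (fun u => gmap ψ u n) ⁻¹' {b} =
      ⋃ x : List Bool, ({u : ℝ | bits ψ u n = x} ∩ {u : ℝ | decide (u < thr ψ x) = b}) := by
    ext u
    simp only [Set.mem_preimage, Set.mem_singleton_iff, Set.mem_iUnion, Set.mem_inter_iff,
      Set.mem_setOf_eq, gmap]
    constructor
    · intro h; exact ⟨bits ψ u n, rfl, h⟩
    · rintro ⟨x, h1, h2⟩; rw [h1]; exact h2
  rw [heq]
  refine MeasurableSet.iUnion fun x => (measurableSet_bits ψ n x).inter ?_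
  rcases b with _|_
  · have : {u : ℝ | decide (u < thr ψ x) = false} = (Set.Iio (thr ψ x))ᶜ := by
      ext u; simp [Set.mem_Iio]
    rw [this]; exact measurableSet_Iio.compl
  · have : {u : ℝ | decide (u < thr ψ x) = true} = Set.Iio (thr ψ x) := by
      ext u; simp [Set.mem_Iio]
    rw [this]; exact measurableSet_Iio

def muF (ψ : ForecastingSystem) : Measure BinSeq :=
  Measure.map (gmap ψ) (MeasureTheory.volume.restrict (Set.Ico 0 1))

lemma gmap_pre_cyl (ψ : ForecastingSystem) (x : List Bool) :
    gmap ψ ⁻¹' cyl x ∩ Set.Ico (0:ℝ) 1 = IcoOf ψ x := by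
  ext u
  constructor
  · rintro ⟨hx, hu⟩
    have hx' : bits ψ u x.length = x := by
      rw [← bprefix_gmap]; exact hx
    have := mem_IcoOf_bits ψ hu x.length
    rwa [hx'] at this
  · intro hu
    have hu01 : u ∈ Set.Ico (0:ℝ) 1 := IcoOf_subset_unit ψ x hu
    refine ⟨?_, hu01⟩
    have := bits_eq_of_mem ψ x.length x rfl hu
    show bprefix (gmap ψ u) x.length = x
    rw [bprefix_gmap]; exact this

lemma muF_cyl (ψ : ForecastingSystem) (x : List Bool) :
    muF ψ (cyl x) = ENNReal.ofReal (Pw ψ x) := by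
  rw [muF, Measure.map_apply (measurable_gmap ψ) (measurableSet_cyl x),
    Measure.restrict_apply' measurableSet_Ico, gmap_pre_cyl, IcoOf, Real.volume_Ico]
  congr 1
  ring

lemma muF_IFM (ψ : ForecastingSystem) : IsForecastMeasure ψ (muF ψ) := by
  constructor
  · constructor
    rw [← cyl_nil, muF_cyl]; simp
  · intro x
    rw [muF_cyl, muF_cyl, Pw_append, ← ENNReal.ofReal_mul (ψ x).2.1]
    congr 1
    simp [wt, mul_comm]

/-! ### Continuity lemmas -/

lemma continuous_Pw (x : List Bool) :
    Continuous fun ψ : ForecastingSystem => Pw ψ x := by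
  unfold Pw
  apply continuous_finset_prod
  intro i _
  unfold wt
  cases h : x.getD i false
  · simp only [h, Bool.false_eq_true, if_false]
    exact continuous_const.sub (continuous_subtype_val.comp (continuous_apply (x.take i)))
  · simp only [h, if_true]
    exact continuous_subtype_val.comp (continuous_apply (x.take i))

lemma continuous_seqPhi :
    Continuous fun p : ForecastingSystem × BinSeq => seqPhi p.1 p.2 := by
  apply continuous_pi
  intro n
  apply Continuous.prodMk
  · rw [continuous_iff_continuousAt]
    intro p₀
    have hopen : IsOpen {p : ForecastingSystem × BinSeq | bprefix p.2 n = bprefix p₀.2 n} :=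
      (prefSet_props n (bprefix p₀.2 n)).1.preimage continuous_snd
    refine ContinuousAt.congr (f := fun p : ForecastingSystem × BinSeq =>
      p.1 (bprefix p₀.2 n)) ?_ ?_
    · exact ((continuous_apply (bprefix p₀.2 n)).comp continuous_fst).continuousAt
    · exact Filter.eventuallyEq_of_mem (hopen.mem_nhds rfl)
        (fun p hp => by simp only [Set.mem_setOf_eq] at hp; rw [hp])
  · exact (continuous_apply n).comp continuous_snd

lemma compact_limit {X : Type*} [TopologicalSpace X] [CompactSpace X]
    (F : Ultrafilter ℕ) (f : ℕ → X) : ∃ x, Tendsto f F (𝓝 x) := by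
  obtain ⟨x, -, hx⟩ := isCompact_univ.ultrafilter_le_nhds (F.map f)
    (by rw [le_principal_iff]; exact Filter.univ_mem)
  exact ⟨x, hx⟩

lemma le_UpProbMeas {φ : ForecastingSystem} {μ : Measure BinSeq}
    (h : IsForecastMeasure φ μ) (E : Set PreqInf) :
    μ {ω | seqPhi φ ω ∈ E} ≤ UpProbMeas E :=
  le_iSup_of_le φ <| le_iSup_of_le μ <| le_iSup_of_le h le_rfl

end Cap

/-- UpProbMeas is a Choquet capacity on Π: monotone, continuous from below on increasing
sequences of arbitrary sets, and continuous from above on decreasing sequences of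
compact sets. -/
theorem upProbMeas_is_capacity :
    (∀ A B : Set PreqInf, A ⊆ B → UpProbMeas A ≤ UpProbMeas B) ∧
    (∀ A : ℕ → Set PreqInf, Monotone A →
      Filter.Tendsto (fun i => UpProbMeas (A i)) Filter.atTop
        (nhds (UpProbMeas (⋃ i, A i)))) ∧
    (∀ K : ℕ → Set PreqInf, (∀ i, IsCompact (K i)) → Antitone K →
      Filter.Tendsto (fun i => UpProbMeas (K i)) Filter.atTop
        (nhds (UpProbMeas (⋂ i, K i)))) := by
  have mono : ∀ A B : Set PreqInf, A ⊆ B → UpProbMeas A ≤ UpProbMeas B := by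
    intro A B h
    refine iSup_mono fun φ => iSup_mono fun μ => iSup_mono fun _ => ?_
    exact measure_mono fun ω hω => h hω
  refine ⟨mono, ?_, ?_⟩
  · -- continuity from below
    intro A hA
    have key : UpProbMeas (⋃ i, A i) = ⨆ i, UpProbMeas (A i) := by
      apply le_antisymm
      · refine iSup_le fun φ => iSup_le fun μ => iSup_le fun hIFM => ?_
        have hset : {ω | seqPhi φ ω ∈ ⋃ i, A i} = ⋃ i, {ω | seqPhi φ ω ∈ A i} := by
          ext ω; simp
        have hm : Monotone fun i => {ω | seqPhi φ ω ∈ A i} :=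
          fun i j h ω hω => hA h hω
        rw [hset, hm.measure_iUnion]
        exact iSup_mono fun i => Cap.le_UpProbMeas hIFM (A i)
      · exact iSup_le fun i => mono _ _ (Set.subset_iUnion A i)
    rw [key]
    exact tendsto_atTop_iSup fun i j h => mono _ _ (hA h)
  · -- continuity from above on compact sets
    intro K hK hKanti
    have hanti : Antitone fun i => UpProbMeas (K i) := fun i j h => mono _ _ (hKanti h)
    suffices h : UpProbMeas (⋂ i, K i) = ⨅ i, UpProbMeas (K i) by
      rw [h]; exact tendsto_atTop_iInf hanti
    refine le_antisymm (le_iInf fun i => mono _ _ (Set.iInter_subset K i)) ?_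
    refine le_of_forall_lt fun a ha => ?_
    obtain ⟨a', ha1, ha2⟩ := exists_between ha
    refine lt_of_lt_of_le ha1 ?_
    -- main argument : a' ≤ UpProbMeas (⋂ i, K i)
    have h1 : ∀ j : ℕ, ∃ φ, ∃ μ : Measure BinSeq,
        IsForecastMeasure φ μ ∧ a' < μ {ω | seqPhi φ ω ∈ K j} := by
      intro j
      have hlt : a' < UpProbMeas (K j) := lt_of_lt_of_le ha2 (iInf_le _ j)
      rw [UpProbMeas, lt_iSup_iff] at hlt
      obtain ⟨φ, hφ⟩ := hlt
      rw [lt_iSup_iff] at hφ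
      obtain ⟨μ, hμ⟩ := hφ
      rw [lt_iSup_iff] at hμ
      obtain ⟨hIFM, hlt'⟩ := hμ
      exact ⟨φ, μ, hIFM, hlt'⟩
    choose φs μs hIFMs hgt using h1
    set 𝒰 : Ultrafilter ℕ := Ultrafilter.of Filter.atTop with h𝒰
    have hU : (𝒰 : Filter ℕ) ≤ Filter.atTop := Ultrafilter.of_le _
    obtain ⟨φ, hφlim⟩ := Cap.compact_limit 𝒰 φs
    have hIFM : IsForecastMeasure φ (Cap.muF φ) := Cap.muF_IFM φ
    haveI : IsProbabilityMeasure (Cap.muF φ) := hIFM.1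
    -- the key estimate
    have key : ∀ j : ℕ, a' ≤ Cap.muF φ {ω | seqPhi φ ω ∈ K j} := by
      intro j
      set C : Set BinSeq := {ω | seqPhi φ ω ∈ K j} with hC
      have hCclosed : IsClosed C := by
        have hc : Continuous fun ω : BinSeq => seqPhi φ ω :=
          Cap.continuous_seqPhi.comp (continuous_const.prodMk continuous_id)
        exact (hK j).isClosed.preimage hc
      set Un : ℕ → Set BinSeq :=
        fun n => (fun ω => bprefix ω n) ⁻¹' ((fun ω => bprefix ω n) '' C) with hUn
      have hCUn : ∀ n, C ⊆ Un n := fun n => Set.subset_preimage_image _ _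
      -- finite decomposition of Un n
      have himg : ∀ n, ((fun ω : BinSeq => bprefix ω n) '' C).Finite := by
        intro n
        refine Set.Finite.subset (Set.finite_range fun f : Fin n → Bool => List.ofFn f) ?_
        rintro _ ⟨ω, -, rfl⟩
        exact ⟨fun i => ω i, rfl⟩
      have hUnion : ∀ n, Un n = ⋃ x ∈ (himg n).toFinset, {ω : BinSeq | bprefix ω n = x} := by
        intro n
        ext ω
        simp only [hUn, Set.mem_preimage, Set.mem_iUnion, Set.mem_setOf_eq,
          Set.Finite.mem_toFinset, exists_prop]
        constructor
        · intro h; exact ⟨bprefix ω n, h, rfl⟩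
        · rintro ⟨x, hx, rfl⟩; exact hx
      have hUnMeas : ∀ n, MeasurableSet (Un n) := by
        intro n; rw [hUnion n]
        exact (himg n).toFinset.measurableSet_biUnion
          fun x _ => (Cap.prefSet_props n x).2.2
      have hUnOpen : ∀ n, IsOpen (Un n) := by
        intro n; rw [hUnion n]
        exact isOpen_biUnion fun x _ => (Cap.prefSet_props n x).1
      -- measure of Un n for any forecast measure
      have hsum : ∀ n (ψ : ForecastingSystem) (ν : Measure BinSeq), IsForecastMeasure ψ ν →
          ν (Un n) = ∑ x ∈ (himg n).toFinset, ENNReal.ofReal (Cap.Pw ψ x) := by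
        intro n ψ ν hν
        rw [hUnion n]
        rw [measure_biUnion_finset ?hd fun x _ => (Cap.prefSet_props n x).2.2]
        case hd =>
          intro x hx y hy hxy
          refine Set.disjoint_left.mpr fun ω h1 h2 => hxy ?_
          simp only [Set.mem_setOf_eq] at h1 h2
          rw [← h1, ← h2]
        refine Finset.sum_congr rfl fun x hx => ?_
        have hxlen : x.length = n := by
          rw [Set.Finite.mem_toFinset] at hx
          obtain ⟨ω, -, rfl⟩ := hx
          exact Cap.bprefix_length ω n
        have : {ω : BinSeq | bprefix ω n = x} = cyl x := by
          rw [cyl, hxlen]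
        rw [this, Cap.IFM_cyl hν]
      -- a' ≤ muF φ (Un n) for every n
      have keyUn : ∀ n, a' ≤ Cap.muF φ (Un n) := by
        intro n
        -- the eventual inclusion claim
        have hclaim : ∀ᶠ k in (𝒰 : Filter ℕ), {ω | seqPhi (φs k) ω ∈ K j} ⊆ Un n := by
          by_contra hcon
          rw [Filter.not_eventually] at hcon
          have hE : ∀ᶠ k in (𝒰 : Filter ℕ), ¬ ({ω | seqPhi (φs k) ω ∈ K j} ⊆ Un n) :=
            Ultrafilter.frequently_iff_eventually.mp hcon
          have hw : ∀ k : ℕ, ∃ ω : BinSeq, ¬ ({ω' | seqPhi (φs k) ω' ∈ K j} ⊆ Un n) →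
              (seqPhi (φs k) ω ∈ K j ∧ ω ∉ Un n) := by
            intro k
            by_cases hk : {ω' | seqPhi (φs k) ω' ∈ K j} ⊆ Un n
            · exact ⟨fun _ => false, fun hc => absurd hk hc⟩
            · obtain ⟨ω, h1, h2⟩ := Set.not_subset.mp hk
              exact ⟨ω, fun _ => ⟨h1, h2⟩⟩
          choose w hwspec using hw
          obtain ⟨ωl, hωl⟩ := Cap.compact_limit 𝒰 w
          have htp : Tendsto (fun k => seqPhi (φs k) (w k)) 𝒰 (𝓝 (seqPhi φ ωl)) := by
            have hpair : Tendsto (fun k => (φs k, w k)) 𝒰 (𝓝 (φ, ωl)) :=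
              hφlim.prodMk_nhds hωl
            exact (Cap.continuous_seqPhi.tendsto (φ, ωl)).comp hpair
          have hin : seqPhi φ ωl ∈ K j := by
            refine (hK j).isClosed.mem_of_tendsto htp ?_
            exact hE.mono fun k hk => (hwspec k hk).1
          have hout : ωl ∈ (Un n)ᶜ := by
            refine ((hUnOpen n).isClosed_compl).mem_of_tendsto hωl ?_
            exact hE.mono fun k hk => (hwspec k hk).2
          exact hout (hCUn n hin)
        -- pass to the limit
        have htend : Tendsto (fun k => ∑ x ∈ (himg n).toFinset,
            ENNReal.ofReal (Cap.Pw (φs k) x)) 𝒰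
            (𝓝 (∑ x ∈ (himg n).toFinset, ENNReal.ofReal (Cap.Pw φ x))) := by
          refine tendsto_finset_sum _ fun x _ => ?_
          have h1 : Tendsto (fun k => Cap.Pw (φs k) x) 𝒰 (𝓝 (Cap.Pw φ x)) :=
            ((Cap.continuous_Pw x).tendsto φ).comp hφlim
          exact (ENNReal.continuous_ofReal.tendsto _).comp h1
        have hev : ∀ᶠ k in (𝒰 : Filter ℕ), a' ≤ ∑ x ∈ (himg n).toFinset,
            ENNReal.ofReal (Cap.Pw (φs k) x) := by
          have hjk : ∀ᶠ k in (𝒰 : Filter ℕ), j ≤ k := hU (Filter.eventually_ge_atTop j)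
          filter_upwards [hjk, hclaim] with k hk1 hk2
          have hsub : {ω | seqPhi (φs k) ω ∈ K k} ⊆ Un n :=
            fun ω hω => hk2 (hKanti hk1 hω)
          have := (hgt k).le.trans (measure_mono hsub)
          rwa [hsum n (φs k) (μs k) (hIFMs k)] at this
        have := ge_of_tendsto htend hev
        rwa [← hsum n φ (Cap.muF φ) hIFM] at this
      -- intersect : ⋂ n, Un n = C
      have hUnAnti : Antitone Un := by
        intro n m hnm ω hω
        obtain ⟨ω', hω'C, h⟩ := hω
        exact ⟨ω', hω'C, Cap.bprefix_eq_iff.mpr fun i hi =>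
          Cap.bprefix_eq_iff.mp h i (lt_of_lt_of_le hi hnm)⟩
      have hInter : ⋂ n, Un n = C := by
        apply Set.Subset.antisymm
        · intro ω hω
          rw [Set.mem_iInter] at hω
          have hex : ∀ n : ℕ, ∃ ω', ω' ∈ C ∧ bprefix ω' n = bprefix ω n := by
            intro n
            obtain ⟨ω', h1, h2⟩ := hω n
            exact ⟨ω', h1, h2⟩
          choose v hv1 hv2 using hex
          have htendv : Tendsto v Filter.atTop (𝓝 ω) := by
            rw [tendsto_pi_nhds]
            intro i
            refine Tendsto.congr' ?_ (tendsto_const_nhds : Tendsto (fun _ : ℕ => ω i) Filter.atTop (𝓝 (ω i)))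
            filter_upwards [Filter.eventually_gt_atTop i] with n hn
            exact (Cap.bprefix_eq_iff.mp (hv2 n) i hn).symm
          exact hCclosed.mem_of_tendsto htendv (Filter.Eventually.of_forall hv1)
        · exact Set.subset_iInter hCUn
      have hmuC : Cap.muF φ C = ⨅ n, Cap.muF φ (Un n) := by
        rw [← hInter]
        refine hUnAnti.measure_iInter (fun n => (hUnMeas n).nullMeasurableSet) ?_
        exact ⟨0, measure_ne_top _ _⟩
      rw [hmuC]
      exact le_iInf keyUn
    -- assemble
    have hset : {ω | seqPhi φ ω ∈ ⋂ i, K i} = ⋂ j, {ω | seqPhi φ ω ∈ K j} := by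
      ext ω; simp
    have hmeas : ∀ j : ℕ, MeasurableSet {ω | seqPhi φ ω ∈ K j} := by
      intro j
      have hc : Continuous fun ω : BinSeq => seqPhi φ ω :=
        Cap.continuous_seqPhi.comp (continuous_const.prodMk continuous_id)
      exact ((hK j).isClosed.preimage hc).measurableSet
    have hanti2 : Antitone fun j => {ω | seqPhi φ ω ∈ K j} :=
      fun i j h ω hω => hKanti h hω
    have : Cap.muF φ {ω | seqPhi φ ω ∈ ⋂ i, K i} = ⨅ j, Cap.muF φ {ω | seqPhi φ ω ∈ K j} := by
      rw [hset]
      exact hanti2.measure_iInter (fun j => (hmeas j).nullMeasurableSet) ⟨0, measure_ne_top _ _⟩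
    calc a' ≤ Cap.muF φ {ω | seqPhi φ ω ∈ ⋂ i, K i} := by rw [this]; exact le_iInf key
      _ ≤ UpProbMeas (⋂ i, K i) := Cap.le_UpProbMeas hIFM _
end
end

section
/- Neither upper game-theoretic nor upper measure-theoretic probability is strongly subadditive: there exist (finite-horizon) prequential events A and B, namely A = {(0,0,1/2,0),(1/2,0,0,0)} and B = {(0,0,1/2,0),(1/2,1,0,0)} as subsets of ([0,1]×{0,1})², such that UpProb(A∪B) + UpProb(A∩B) = 3/2 > 1 = UpProb(A) + UpProb(B). -/
open Filter Topology MeasureTheory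
open scoped ENNReal NNReal unitInterval

noncomputable section

/-- Finite-horizon upper game-theoretic probability: for a set E of finite prequential
sequences, the infimum of V(Λ) over non-negative farthingales V with V(x) ≥ 1 for all
x ∈ E. -/
def UpProbFin (E : Set PreqFin) : ℝ≥0∞ :=
  sInf {a | ∃ V : PreqFin → ℝ≥0∞, IsFarthingale V ∧ V [] = a ∧ ∀ x ∈ E, 1 ≤ V x}

def half : unitInterval := ⟨1/2, by constructor <;> norm_num⟩

/-- The event A = {(0,0,1/2,0), (1/2,0,0,0)} ⊆ ([0,1]×{0,1})². -/
def setA : Set PreqFin :=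
  {[((0 : unitInterval), false), (half, false)], [(half, false), ((0 : unitInterval), false)]}

/-- The event B = {(0,0,1/2,0), (1/2,1,0,0)} ⊆ ([0,1]×{0,1})². -/
def setB : Set PreqFin :=
  {[((0 : unitInterval), false), (half, false)], [(half, true), ((0 : unitInterval), false)]}


/-! ### Auxiliary material -/

open scoped Classical

lemma ofReal_combo (p : unitInterval) :
    ENNReal.ofReal (1 - (p : ℝ)) + ENNReal.ofReal (p : ℝ) = 1 := by
  rw [← ENNReal.ofReal_add (by linarith [p.2.2]) p.2.1]; norm_num

lemma combo_const (p : unitInterval) (c : ℝ≥0∞) :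
    ENNReal.ofReal (1 - (p : ℝ)) * c + ENNReal.ofReal (p : ℝ) * c = c := by
  rw [← add_mul, ofReal_combo, one_mul]

lemma myOfReal_half : ENNReal.ofReal (1/2 : ℝ) = 1/2 := by
  rw [ENNReal.ofReal_div_of_pos] <;> norm_num

lemma coe_half : (half : ℝ) = 1/2 := rfl

lemma zero_ne_half' : (0 : unitInterval) ≠ half := by
  intro h; have := congrArg Subtype.val h; norm_num [half] at this

lemma half_add_half : (1:ℝ≥0∞)/2 + 1/2 = 1 := by
  rw [ENNReal.div_add_div_same, show (1:ℝ≥0∞)+1 = 2 from by norm_num, ENNReal.div_self] <;>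
    norm_num

/-- Farthingales determined by values at the root, level 1, and level ≥ 2 (constant beyond). -/
def mkV (r : ℝ≥0∞) (f : unitInterval × Bool → ℝ≥0∞)
    (g : unitInterval × Bool → unitInterval × Bool → ℝ≥0∞) : PreqFin → ℝ≥0∞
  | [] => r
  | [a] => f a
  | a :: b :: _ => g a b

lemma mkV_farthingale {r : ℝ≥0∞} {f : unitInterval × Bool → ℝ≥0∞}
    {g : unitInterval × Bool → unitInterval × Bool → ℝ≥0∞}
    (hr : ∀ p : unitInterval,
      r = ENNReal.ofReal (1 - (p : ℝ)) * f (p, false) + ENNReal.ofReal (p : ℝ) * f (p, true))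
    (hf : ∀ (a : unitInterval × Bool) (p : unitInterval),
      f a = ENNReal.ofReal (1 - (p : ℝ)) * g a (p, false)
          + ENNReal.ofReal (p : ℝ) * g a (p, true)) :
    IsFarthingale (mkV r f g) := by
  intro x p
  match x with
  | [] => simpa [mkV] using hr p
  | [a] => simpa [mkV] using hf a p
  | a :: b :: l =>
      simp only [List.cons_append, mkV]
      exact (combo_const p _).symm

lemma farth_zero {V : PreqFin → ℝ≥0∞} (hV : IsFarthingale V) (x : PreqFin) :
    V x = V (x ++ [((0 : unitInterval), false)]) := by
  have h := hV x 0
  simpa using h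

lemma farth_half {V : PreqFin → ℝ≥0∞} (hV : IsFarthingale V) (x : PreqFin) :
    V x = 1/2 * V (x ++ [(half, false)]) + 1/2 * V (x ++ [(half, true)]) := by
  have h := hV x half
  rw [coe_half] at h
  norm_num at h
  rwa [myOfReal_half] at h

lemma UpProbFin_mono {E F : Set PreqFin} (h : E ⊆ F) : UpProbFin E ≤ UpProbFin F := by
  apply sInf_le_sInf
  rintro a ⟨V, h1, h2, h3⟩
  exact ⟨V, h1, h2, fun x hx => h3 x (h hx)⟩

/-! The witness farthingale for `setA`. -/

def fA : unitInterval × Bool → ℝ≥0∞ :=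
  fun a => if a.1 = half then (if a.2 then 0 else 1) else 1/2

def gA : unitInterval × Bool → unitInterval × Bool → ℝ≥0∞ :=
  fun a b => if a = (half, false) then 1
    else if a = (half, true) then 0
    else if a = ((0 : unitInterval), false) ∧ b.1 = half then (if b.2 then 0 else 1)
    else 1/2

lemma gA_vf (b : unitInterval × Bool) : gA (half, false) b = 1 := by simp [gA]
lemma gA_vt (b : unitInterval × Bool) : gA (half, true) b = 0 := by simp [gA]
lemma gA_u_f : gA ((0:unitInterval), false) (half, false) = 1 := by
  simp [gA, Prod.ext_iff, zero_ne_half']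
lemma gA_u_t : gA ((0:unitInterval), false) (half, true) = 0 := by
  simp [gA, Prod.ext_iff, zero_ne_half']
lemma gA_other {q : unitInterval} {y : Bool} {p : unitInterval} {z : Bool}
    (hq : q ≠ half) (h : ¬((q, y) = ((0:unitInterval), false) ∧ p = half)) :
    gA (q, y) (p, z) = 1/2 := by
  simp only [gA]
  rw [if_neg (fun hc => hq (congrArg Prod.fst hc)),
      if_neg (fun hc => hq (congrArg Prod.fst hc)),
      if_neg (fun hc => h ⟨hc.1, hc.2⟩)]

lemma fA_farth : IsFarthingale (mkV (1/2) fA gA) := by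
  apply mkV_farthingale
  · intro p
    by_cases hp : p = half
    · subst hp
      simp only [fA]
      norm_num
      rw [coe_half]
      norm_num [myOfReal_half]
    · simp only [fA]
      rw [if_neg hp, if_neg hp]
      exact (combo_const p _).symm
  · rintro ⟨q, y⟩ p
    by_cases hq : q = half
    · subst hq
      cases y
      · rw [gA_vf, gA_vf]
        simp only [fA]
        norm_num
        exact (ofReal_combo p).symm
      · rw [gA_vt, gA_vt]
        simp [fA]
    · by_cases h1 : (q, y) = ((0:unitInterval), false) ∧ p = half
      · obtain ⟨ha, hp⟩ := h1
        rw [ha, hp, gA_u_f, gA_u_t]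
        simp only [fA]
        rw [if_neg zero_ne_half']
        rw [coe_half]
        norm_num [myOfReal_half]
      · rw [gA_other hq h1, gA_other hq h1]
        simp only [fA]
        rw [if_neg hq]
        exact (combo_const p _).symm

/-! The witness farthingale for `setB`. -/

def fB : unitInterval × Bool → ℝ≥0∞ :=
  fun a => if a.1 = half then (if a.2 then 1 else 0) else 1/2

def gB : unitInterval × Bool → unitInterval × Bool → ℝ≥0∞ :=
  fun a b => if a = (half, true) then 1
    else if a = (half, false) then 0
    else if a = ((0 : unitInterval), false) ∧ b.1 = half then (if b.2 then 0 else 1)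
    else 1/2

lemma gB_wt (b : unitInterval × Bool) : gB (half, true) b = 1 := by simp [gB]
lemma gB_wf (b : unitInterval × Bool) : gB (half, false) b = 0 := by simp [gB]
lemma gB_u_f : gB ((0:unitInterval), false) (half, false) = 1 := by
  simp [gB, Prod.ext_iff, zero_ne_half']
lemma gB_u_t : gB ((0:unitInterval), false) (half, true) = 0 := by
  simp [gB, Prod.ext_iff, zero_ne_half']
lemma gB_other {q : unitInterval} {y : Bool} {p : unitInterval} {z : Bool}
    (hq : q ≠ half) (h : ¬((q, y) = ((0:unitInterval), false) ∧ p = half)) :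
    gB (q, y) (p, z) = 1/2 := by
  simp only [gB]
  rw [if_neg (fun hc => hq (congrArg Prod.fst hc)),
      if_neg (fun hc => hq (congrArg Prod.fst hc)),
      if_neg (fun hc => h ⟨hc.1, hc.2⟩)]

lemma fB_farth : IsFarthingale (mkV (1/2) fB gB) := by
  apply mkV_farthingale
  · intro p
    by_cases hp : p = half
    · subst hp
      simp only [fB]
      norm_num
      rw [coe_half]
      norm_num [myOfReal_half]
    · simp only [fB]
      rw [if_neg hp, if_neg hp]
      exact (combo_const p _).symm
  · rintro ⟨q, y⟩ p
    by_cases hq : q = half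
    · subst hq
      cases y
      · rw [gB_wf, gB_wf]
        simp [fB]
      · rw [gB_wt, gB_wt]
        simp only [fB]
        norm_num
        exact (ofReal_combo p).symm
    · by_cases h1 : (q, y) = ((0:unitInterval), false) ∧ p = half
      · obtain ⟨ha, hp⟩ := h1
        rw [ha, hp, gB_u_f, gB_u_t]
        simp only [fB]
        rw [if_neg zero_ne_half']
        rw [coe_half]
        norm_num [myOfReal_half]
      · rw [gB_other hq h1, gB_other hq h1]
        simp only [fB]
        rw [if_neg hq]
        exact (combo_const p _).symm

/-! The four values. -/

lemma up_union : UpProbFin (setA ∪ setB) = 1 := by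
  apply le_antisymm
  · apply sInf_le
    exact ⟨fun _ => 1, fun x p => (combo_const p 1).symm, rfl, fun x _ => le_rfl⟩
  · apply le_sInf
    rintro a ⟨V, hV, rfl, hE⟩
    have hv : 1 ≤ V [(half, false), ((0 : unitInterval), false)] :=
      hE _ (Or.inl (by simp [setA]))
    have hw : 1 ≤ V [(half, true), ((0 : unitInterval), false)] :=
      hE _ (Or.inr (by simp [setB]))
    have hvf : 1 ≤ V [(half, false)] := by
      rw [farth_zero hV [(half, false)]]; exact hv
    have hwt : 1 ≤ V [(half, true)] := by
      rw [farth_zero hV [(half, true)]]; exact hw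
    have h0 := farth_half hV []
    simp only [List.nil_append] at h0
    calc (1 : ℝ≥0∞) = 1/2 * 1 + 1/2 * 1 := by rw [mul_one, half_add_half]
      _ ≤ 1/2 * V [(half, false)] + 1/2 * V [(half, true)] :=
          add_le_add (mul_le_mul_right hvf _) (mul_le_mul_right hwt _)
      _ = V [] := h0.symm

lemma up_inter : UpProbFin (setA ∩ setB) = 1/2 := by
  apply le_antisymm
  · apply sInf_le
    refine ⟨mkV (1/2) (fun _ => 1/2)
      (fun a b => if a = ((0 : unitInterval), false) ∧ b.1 = half then
        (if b.2 then 0 else 1) else 1/2), mkV_farthingale ?_ ?_, rfl, ?_⟩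
    · intro p; exact (combo_const p _).symm
    · intro a p
      by_cases h1 : a = ((0 : unitInterval), false) ∧ p = half
      · obtain ⟨ha, hp⟩ := h1
        subst ha; subst hp
        simp only [if_pos (⟨rfl, rfl⟩ : _ ∧ _)]
        rw [coe_half]
        norm_num [myOfReal_half]
      · rw [if_neg (by simpa using h1), if_neg (by simpa using h1)]
        exact (combo_const p _).symm
    · rintro x ⟨hA, hB⟩
      rcases hA with rfl | rfl
      · simp [mkV]
      · exfalso
        rcases hB with h | h <;> simp [Prod.ext_iff, Subtype.ext_iff, half] at h
  · apply le_sInf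
    rintro a ⟨V, hV, rfl, hE⟩
    have hu : 1 ≤ V [((0 : unitInterval), false), (half, false)] :=
      hE _ ⟨Or.inl rfl, Or.inl rfl⟩
    have h1 := farth_zero hV []
    simp only [List.nil_append] at h1
    have h2 := farth_half hV [((0 : unitInterval), false)]
    calc (1:ℝ≥0∞)/2 = 1/2 * 1 := (mul_one _).symm
      _ ≤ 1/2 * V [((0 : unitInterval), false), (half, false)] := mul_le_mul_right hu _
      _ ≤ V [((0 : unitInterval), false)] := by rw [h2]; exact le_self_add
      _ = V [] := h1.symm

lemma up_setA : UpProbFin setA = 1/2 := by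
  apply le_antisymm
  · apply sInf_le
    refine ⟨mkV (1/2) fA gA, fA_farth, rfl, ?_⟩
    rintro x (rfl | rfl)
    · show 1 ≤ gA _ _
      rw [gA_u_f]
    · show 1 ≤ gA _ _
      rw [gA_vf]
  · calc (1:ℝ≥0∞)/2 = UpProbFin (setA ∩ setB) := up_inter.symm
      _ ≤ UpProbFin setA := UpProbFin_mono Set.inter_subset_left

lemma up_setB : UpProbFin setB = 1/2 := by
  apply le_antisymm
  · apply sInf_le
    refine ⟨mkV (1/2) fB gB, fB_farth, rfl, ?_⟩
    rintro x (rfl | rfl)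
    · show 1 ≤ gB _ _
      rw [gB_u_f]
    · show 1 ≤ gB _ _
      rw [gB_wt]
  · calc (1:ℝ≥0∞)/2 = UpProbFin (setA ∩ setB) := up_inter.symm
      _ ≤ UpProbFin setB := UpProbFin_mono Set.inter_subset_right

/-- Failure of strong subadditivity for upper game-theoretic probability:
UpProb(A∪B) + UpProb(A∩B) = 3/2 > 1 = UpProb(A) + UpProb(B). -/
theorem upProb_not_strongly_subadditive :
    UpProbFin (setA ∪ setB) + UpProbFin (setA ∩ setB) = 3/2 ∧
      UpProbFin setA + UpProbFin setB = 1 ∧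
      (1 : ℝ≥0∞) < 3/2 := by
  refine ⟨?_, ?_, ?_⟩
  · rw [up_union, up_inter]
    rw [ENNReal.eq_div_iff (by norm_num) (by norm_num), mul_add,
      ENNReal.mul_div_cancel' (by norm_num) (by norm_num)]
    norm_num
  · rw [up_setA, up_setB, half_add_half]
  · rw [ENNReal.lt_div_iff_mul_lt (by norm_num) (by norm_num)]
    norm_num
end
end
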